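/- arXiv:2409.19344 — 7 statements merged into one kernel-verified Lean document; each statement's English description precedes it below -/
import Mathlib

section
/- Let r ≥ 3, t ≥ 2^r − r and k ≥ t + r be integers, and let n be an integer satisfying 2k − t − r + 2 ≤ n ≤ ((t+r)/2)^{1/(r−1)}·(k−t−r+2) + t + r − 2. Then |𝓐₁(n,k,r,t)| > C(n−t, k−t); in particular, for such n the maximum size of an r-wise t-intersecting family of k-subsets of [n] exceeds C(n−t, k−t). -/
/-!
Put `m = n - t - r` and `a = k - t - r`. Vandermonde's identity gives
`C(n-t, k-t) = ∑ⱼ C(r, j) C(m, a+j)`, while `𝓐₁` has exactly `C(m, a) + (t+r) C(m, a+1)` members.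
With `c = ((t+r)/2)^(1/(r-1))`, the upper bound on `n` says `m + 2 ≤ c (a + 2)`, so for `s > a`
every ratio `C(m, s+1) / C(m, s)` is at most `c - 1`; hence the terms with `j ≥ 1` sum to at most
`C(m, a+1) (c^r - 1) / (c - 1)`. Since `c^r = c (t+r)/2` and `t ≥ 2^r - r` forces `c ≥ 2`, this is
less than `(t+r) C(m, a+1)`.
-/

/-- A family `𝓕` is `r`-wise `t`-intersecting if any `r` (not necessarily distinct)
members have at least `t` common elements. -/
def RwiseIntersecting (r t : ℕ) (𝓕 : Finset (Finset ℕ)) : Prop :=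
  ∀ G : Fin r → Finset ℕ, (∀ i, G i ∈ 𝓕) → t ≤ (⋂ i, ((G i : Finset ℕ) : Set ℕ)).ncard

/-- The Frankl family `𝓐₁(n,k,r,t)`: all `k`-element subsets `A` of `[n]` with
`|A ∩ [t+r]| ≥ t + r - 1`. -/
def franklFamilyOne (n k r t : ℕ) : Finset (Finset ℕ) :=
  (Finset.powersetCard k (Finset.Icc 1 n)).filter
    (fun A => t + r - 1 ≤ (A ∩ Finset.Icc 1 (t + r)).card)

open Finset

theorem card_filter_card_inter_eq {α : Type*} [DecidableEq α] {S T : Finset α} (hTS : T ⊆ S)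
    {i k : ℕ} (hik : i ≤ k) :
    #{A ∈ powersetCard k S | #(A ∩ T) = i} = (#T).choose i * (#(S \ T)).choose (k - i) := by
  rw [← card_powersetCard, ← card_powersetCard, ← card_product]
  symm
  have union_inter {X Y : Finset α} (hXT : X ⊆ T) (hYT : Disjoint Y T) : (X ∪ Y) ∩ T = X := by
    rw [union_inter_distrib_right, inter_eq_left.mpr hXT, disjoint_iff_inter_eq_empty.mp hYT,
      union_empty]
  have union_sdiff {X Y : Finset α} (hXT : X ⊆ T) (hYT : Disjoint Y T) : (X ∪ Y) \ T = Y := by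
    rw [union_sdiff_distrib, sdiff_eq_empty_iff_subset.mpr hXT, empty_union, hYT.sdiff_eq_left]
  refine card_nbij' (fun p => p.1 ∪ p.2) (fun A => (A ∩ T, A \ T)) ?_ ?_ ?_ ?_
  · rintro ⟨X, Y⟩ hXY
    simp only [coe_product, coe_filter, Set.mem_prod, mem_coe, mem_powersetCard, subset_sdiff]
      at hXY ⊢
    obtain ⟨⟨hXT, rfl⟩, ⟨hYS, hYT⟩, hY⟩ := hXY
    refine ⟨⟨union_subset (hXT.trans hTS) hYS, ?_⟩, by rw [union_inter hXT hYT]⟩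
    rw [card_union_of_disjoint (hYT.symm.mono_left hXT), hY]
    omega
  · intro A hA
    simp only [coe_product, coe_filter, Set.mem_prod, mem_coe, mem_powersetCard] at hA ⊢
    refine ⟨⟨inter_subset_right, hA.2⟩, sdiff_subset_sdiff hA.1.1 subset_rfl, ?_⟩
    rw [card_sdiff, inter_comm, hA.2, hA.1.2]
  · rintro ⟨X, Y⟩ hXY
    simp only [coe_product, Set.mem_prod, mem_coe, mem_powersetCard, subset_sdiff] at hXY
    exact Prod.ext (union_inter hXY.1.1 hXY.2.1.2) (union_sdiff hXY.1.1 hXY.2.1.2)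
  · intro A _
    exact (union_comm _ _).trans (sdiff_union_inter A T)

theorem card_franklFamilyOne {n k r t : ℕ} (hn : t + r ≤ n) (hk : t + r ≤ k) (htr : 1 ≤ t + r) :
    #(franklFamilyOne n k r t) =
      (n - (t + r)).choose (k - (t + r)) + (t + r) * (n - (t + r)).choose (k - (t + r) + 1) := by
  set T := Icc 1 (t + r)
  have hTS : T ⊆ Icc 1 n := Icc_subset_Icc le_rfl hn
  have hT : #T = t + r := by simp [T]
  have hST : #(Icc 1 n \ T) = n - (t + r) := by
    rw [card_sdiff_of_subset hTS, hT, Nat.card_Icc, Nat.add_sub_cancel]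
  have hsplit : franklFamilyOne n k r t = {A ∈ powersetCard k (Icc 1 n) | #(A ∩ T) = t + r} ∪
      {A ∈ powersetCard k (Icc 1 n) | #(A ∩ T) = t + r - 1} := by
    rw [← filter_or]
    refine filter_congr fun A _ => ?_
    show t + r - 1 ≤ #(A ∩ T) ↔ _
    have : #(A ∩ T) ≤ t + r := hT ▸ card_le_card inter_subset_right
    omega
  rw [hsplit, card_union_of_disjoint (disjoint_filter.mpr fun _ _ h => by omega),
    card_filter_card_inter_eq hTS hk, card_filter_card_inter_eq hTS (by omega), hT, hST,
    Nat.choose_self, Nat.choose_symm htr, Nat.choose_one_right, one_mul,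
    show k - (t + r - 1) = k - (t + r) + 1 by omega]

theorem rwiseIntersecting_of_card_sdiff_le_one {r t : ℕ} {𝓕 : Finset (Finset ℕ)} (T : Finset ℕ)
    (hr : 0 < r) (hT : t + r ≤ #T) (h𝓕 : ∀ F ∈ 𝓕, #(T \ F) ≤ 1) : RwiseIntersecting r t 𝓕 := by
  intro G hG
  set D := univ.biUnion fun i => T \ G i
  have hD : #D ≤ r := by
    calc #D ≤ ∑ i, #(T \ G i) := card_biUnion_le
      _ ≤ ∑ _i : Fin r, 1 := sum_le_sum fun i _ => h𝓕 _ (hG i)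
      _ = r := by simp
  have hsub : ((T \ D : Finset ℕ) : Set ℕ) ⊆ ⋂ i, (G i : Set ℕ) := by
    refine Set.subset_iInter fun i x hx => ?_
    obtain ⟨hxT, hxD⟩ := mem_sdiff.mp hx
    by_contra hxG
    exact hxD (mem_biUnion.mpr ⟨i, mem_univ i, mem_sdiff.mpr ⟨hxT, hxG⟩⟩)
  have hfin : (⋂ i, (G i : Set ℕ)).Finite := (G ⟨0, hr⟩).finite_toSet.subset (Set.iInter_subset _ _)
  calc t ≤ #T - #D := by omega
    _ ≤ #(T \ D) := le_card_sdiff D T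
    _ = ((T \ D : Finset ℕ) : Set ℕ).ncard := (Set.ncard_coe_finset _).symm
    _ ≤ (⋂ i, (G i : Set ℕ)).ncard := Set.ncard_le_ncard hsub hfin

theorem franklFamilyOne_rwiseIntersecting {n k r t : ℕ} (hr : 0 < r) :
    RwiseIntersecting r t (franklFamilyOne n k r t) := by
  refine rwiseIntersecting_of_card_sdiff_le_one (Icc 1 (t + r)) hr (by simp) fun F hF => ?_
  have hF := (mem_filter.mp hF).2
  rw [card_sdiff, Nat.card_Icc]
  omega

theorem choose_add_add_eq_sum_range (m r a : ℕ) :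
    (m + r).choose (a + r) = ∑ j ∈ range (r + 1), r.choose j * m.choose (a + j) := by
  rw [add_comm m r, Nat.add_choose_eq,
    Nat.sum_antidiagonal_eq_sum_range_succ (fun i j => r.choose i * m.choose j)]
  calc ∑ i ∈ range (a + r).succ, r.choose i * m.choose (a + r - i)
      = ∑ i ∈ range (r + 1), r.choose i * m.choose (a + r - i) := by
        rw [Nat.succ_eq_add_one, show a + r + 1 = r + 1 + a by omega, sum_range_add, add_eq_left]
        exact sum_eq_zero fun i _ => by rw [Nat.choose_eq_zero_of_lt (by omega), zero_mul]
    _ = ∑ j ∈ range (r + 1), r.choose (r - j) * m.choose (a + r - (r - j)) :=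
        (sum_range_reflect _ _).symm
    _ = ∑ j ∈ range (r + 1), r.choose j * m.choose (a + j) := by
        refine sum_congr rfl fun j hj => ?_
        have hjr : j ≤ r := Nat.lt_succ_iff.mp (mem_range.mp hj)
        rw [Nat.choose_symm hjr, show a + r - (r - j) = a + j by omega]

theorem choose_add_le_choose_mul_pow {m b : ℕ} {ρ : ℝ} (hρ : 0 ≤ ρ)
    (hmb : (m : ℝ) - b ≤ ρ * (b + 1)) (j : ℕ) :
    (m.choose (b + j) : ℝ) ≤ m.choose b * ρ ^ j := by
  induction j with
  | zero => simp
  | succ j ih =>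
    set s := b + j
    have hsub : ((m - s : ℕ) : ℝ) ≤ ρ * (s + 1) := by
      rcases le_total s m with hsm | hms
      · have : (b : ℝ) ≤ s := by simp [s]
        rw [Nat.cast_sub hsm]
        nlinarith
      · rw [Nat.sub_eq_zero_of_le hms, Nat.cast_zero]
        positivity
    have hstep : (m.choose (s + 1) : ℝ) * (s + 1) ≤ m.choose s * ρ * (s + 1) := by
      have hid : (m.choose (s + 1) : ℝ) * (s + 1) = m.choose s * (m - s : ℕ) := by
        exact_mod_cast Nat.choose_succ_right_eq m s
      rw [hid, mul_assoc]
      gcongr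
    calc (m.choose (b + (j + 1)) : ℝ) = m.choose (s + 1) := rfl
      _ ≤ m.choose s * ρ := le_of_mul_le_mul_right hstep (by positivity)
      _ ≤ m.choose b * ρ ^ j * ρ := by gcongr
      _ = m.choose b * ρ ^ (j + 1) := by ring

theorem sum_choose_mul_choose_lt {r m b L : ℕ} {d : ℝ} (hd : 0 < d) (hbm : b ≤ m)
    (hmb : (m : ℝ) - b ≤ d * (b + 1)) (hL : (1 + d) ^ r - 1 < L * d) :
    ∑ i ∈ range r, r.choose (i + 1) * m.choose (b + i) < L * m.choose b := by
  have hchoose : (0 : ℝ) < m.choose b := by exact_mod_cast Nat.choose_pos hbm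
  have hbinom : ∑ i ∈ range r, (r.choose (i + 1) : ℝ) * d ^ (i + 1) = (1 + d) ^ r - 1 := by
    rw [add_comm 1 d, add_pow, sum_range_succ']
    simp [mul_comm]
  have hsum : d * ∑ i ∈ range r, (r.choose (i + 1) * m.choose (b + i) : ℝ)
      ≤ m.choose b * ((1 + d) ^ r - 1) := by
    rw [← hbinom, mul_sum, mul_sum]
    refine sum_le_sum fun i _ => ?_
    calc d * (r.choose (i + 1) * m.choose (b + i) : ℝ)
        ≤ d * (r.choose (i + 1) * (m.choose b * d ^ i)) := by
          gcongr
          exact choose_add_le_choose_mul_pow hd.le hmb i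
      _ = m.choose b * (r.choose (i + 1) * d ^ (i + 1)) := by ring
  have hreal : d * ∑ i ∈ range r, (r.choose (i + 1) * m.choose (b + i) : ℝ)
      < d * (L * m.choose b) := by
    calc _ ≤ m.choose b * ((1 + d) ^ r - 1) := hsum
      _ < m.choose b * (L * d) := by gcongr
      _ = d * (L * m.choose b) := by ring
  exact_mod_cast lt_of_mul_lt_mul_left hreal hd.le

theorem choose_lt_card_franklFamilyOne {m a r t : ℕ} {d : ℝ} (hr : 0 < r) (hd : 0 < d)
    (ham : a + 1 ≤ m) (hmd : (m : ℝ) + 1 ≤ (d + 1) * (a + 2))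
    (hL : (1 + d) ^ r - 1 < (t + r) * d) :
    (m + r).choose (a + r) < #(franklFamilyOne (m + (t + r)) (a + (t + r)) r t) := by
  have hsum := sum_choose_mul_choose_lt (r := r) (b := a + 1) (L := t + r) hd ham
    (by push_cast; linarith) (by exact_mod_cast hL)
  rw [card_franklFamilyOne (by omega) (by omega) (by omega), Nat.add_sub_cancel,
    Nat.add_sub_cancel, choose_add_add_eq_sum_range, sum_range_succ']
  simp only [Nat.choose_zero_right, one_mul, add_zero, ← add_assoc, add_right_comm a _ 1]
  omega

theorem two_le_rpow_inv_natCast {x : ℝ} {N : ℕ} (hN : N ≠ 0) (hx : 2 ^ N ≤ x) :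
    2 ≤ x ^ (N⁻¹ : ℝ) := by
  rw [Real.le_rpow_inv_iff_of_pos zero_le_two ((by positivity : (0 : ℝ) ≤ 2 ^ N).trans hx)
    (by positivity), Real.rpow_natCast]
  exact hx

theorem franklFamilyOne_card_gt
    (r t k n : ℕ) (hr : 3 ≤ r) (ht : 2 ^ r - r ≤ t) (hk : t + r ≤ k)
    (hn1 : 2 * (k : ℝ) - (t : ℝ) - (r : ℝ) + 2 ≤ (n : ℝ))
    (hn2 : (n : ℝ) ≤ (((t : ℝ) + (r : ℝ)) / 2) ^ ((1 : ℝ) / ((r : ℝ) - 1)) *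
      ((k : ℝ) - (t : ℝ) - (r : ℝ) + 2) + (t : ℝ) + (r : ℝ) - 2) :
    Nat.choose (n - t) (k - t) < (franklFamilyOne n k r t).card ∧
    ∃ 𝓕 ⊆ Finset.powersetCard k (Finset.Icc 1 n),
      RwiseIntersecting r t 𝓕 ∧ Nat.choose (n - t) (k - t) < 𝓕.card := by
  have hkn : 2 * k + 2 ≤ n + t + r := by exact_mod_cast (by linarith : (2 * k + 2 : ℝ) ≤ n + t + r)
  obtain ⟨a, rfl⟩ := Nat.exists_eq_add_of_le' hk
  obtain ⟨m, rfl⟩ := Nat.exists_eq_add_of_le' (by omega : t + r ≤ n)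
  rw [one_div, ← Nat.cast_pred (by omega)] at hn2
  set x : ℝ := ((t : ℝ) + r) / 2
  set c : ℝ := x ^ (((r - 1 : ℕ) : ℝ)⁻¹)
  have hx : 2 ^ (r - 1) ≤ x := by
    have h : 2 ^ (r - 1) * 2 ≤ t + r := by
      rw [← pow_succ, Nat.sub_add_cancel (by omega)]
      have := @Nat.lt_two_pow_self r
      omega
    rw [le_div_iff₀ two_pos]
    exact_mod_cast h
  have hc2 : 2 ≤ c := two_le_rpow_inv_natCast (by omega) hx
  have hcr : c ^ r = c * x := by
    rw [← Nat.sub_add_cancel (by omega : 1 ≤ r), pow_succ, mul_comm,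
      Real.rpow_inv_natCast_pow (by positivity) (by omega)]
  have hlt : (m + r).choose (a + r) < #(franklFamilyOne (m + (t + r)) (a + (t + r)) r t) := by
    refine choose_lt_card_franklFamilyOne (d := c - 1) (by omega) (by linarith) (by omega)
      (by push_cast at hn2; linarith) ?_
    rw [add_sub_cancel, hcr, show (t : ℝ) + r = 2 * x by ring]
    nlinarith [mul_nonneg (by positivity : (0 : ℝ) ≤ x) (sub_nonneg.mpr hc2)]
  rw [show m + (t + r) - t = m + r by omega, show a + (t + r) - t = a + r by omega]
  exact ⟨hlt, _, filter_subset _ _, franklFamilyOne_rwiseIntersecting (by omega), hlt⟩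
end

section
/- Let r ≥ 2, t ≥ 1, and let 𝓖 be a nonempty r-wise t-intersecting family of k-element subsets of [n] that is not a t-star, i.e., there is no t-element set contained in every member of 𝓖. Then either k ≥ t + r, or k = t + r − 1 and there exists a (k+1)-element set Y ⊆ [n] such that every member of 𝓖 is a subset of Y. -/
lemma mem_foldr_inter (x : ℕ) (F : Finset ℕ) (l : List (Finset ℕ)) :
    x ∈ l.foldr (· ∩ ·) F ↔ x ∈ F ∧ ∀ A ∈ l, x ∈ A := by
  induction l with
  | nil => simp
  | cons B l ih => simp [ih]; tauto

lemma inter_card (r t : ℕ) (hr : 2 ≤ r) (𝓖 : Finset (Finset ℕ))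
    (hint : RwiseIntersecting r t 𝓖) (F : Finset ℕ) (hF : F ∈ 𝓖)
    (l : List (Finset ℕ)) (hl : ∀ A ∈ l, A ∈ 𝓖) (hlen : l.length + 1 ≤ r) :
    t ≤ (l.foldr (· ∩ ·) F).card := by
  set G : Fin r → Finset ℕ := fun i => l.getD i F with hG
  have hGmem : ∀ i, G i ∈ 𝓖 := by
    intro i
    by_cases h : (i : ℕ) < l.length
    · rw [hG]; simp only []
      rw [List.getD_eq_getElem l F h]
      exact hl _ (List.getElem_mem h)
    · rw [hG]; simp only []
      rw [List.getD_eq_default l F (by omega)]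
      exact hF
  have hset : (⋂ i, ((G i : Finset ℕ) : Set ℕ)) = ↑(l.foldr (· ∩ ·) F) := by
    ext x
    simp only [Set.mem_iInter, Finset.mem_coe, mem_foldr_inter]
    constructor
    · intro h
      constructor
      · have h2 : x ∈ l.getD (r - 1) F := h ⟨r - 1, by omega⟩
        rwa [List.getD_eq_default l F (by omega)] at h2
      · intro A hA
        obtain ⟨m, hm, rfl⟩ := List.mem_iff_getElem.1 hA
        have h2 : x ∈ l.getD m F := h ⟨m, by omega⟩
        rwa [List.getD_eq_getElem l F hm] at h2
    · rintro ⟨hxF, hxl⟩ i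
      by_cases h : (i : ℕ) < l.length
      · show x ∈ l.getD (i : ℕ) F
        rw [List.getD_eq_getElem l F h]
        exact hxl _ (List.getElem_mem h)
      · show x ∈ l.getD (i : ℕ) F
        rw [List.getD_eq_default l F (by omega)]
        exact hxF
  have h3 := hint G hGmem
  rwa [hset, Set.ncard_coe_finset] at h3

theorem rwise_intersecting_not_star_structure
    (n k r t : ℕ) (hr : 2 ≤ r) (ht : 1 ≤ t)
    (𝓖 : Finset (Finset ℕ)) (hne : 𝓖.Nonempty)
    (h𝓖 : 𝓖 ⊆ Finset.powersetCard k (Finset.Icc 1 n))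
    (hint : RwiseIntersecting r t 𝓖)
    (hstar : ¬ ∃ T : Finset ℕ, T.card = t ∧ ∀ G ∈ 𝓖, T ⊆ G) :
    t + r ≤ k ∨
      (k + 1 = t + r ∧ ∃ Y ⊆ Finset.Icc 1 n, Y.card = k + 1 ∧ ∀ G ∈ 𝓖, G ⊆ Y) := by
  have hcard : ∀ G ∈ 𝓖, G.card = k := fun G hG => (Finset.mem_powersetCard.1 (h𝓖 hG)).2
  have hsubI : ∀ G ∈ 𝓖, G ⊆ Finset.Icc 1 n := fun G hG => (Finset.mem_powersetCard.1 (h𝓖 hG)).1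
  have mkstar : ∀ A : Finset ℕ, t ≤ A.card → (∀ H ∈ 𝓖, A ⊆ H) → False := by
    intro A hA hall
    obtain ⟨T, hTA, hT⟩ := Finset.exists_subset_card_eq hA
    exact hstar ⟨T, hT, fun G hG => hTA.trans (hall G hG)⟩
  have key : ∀ (j₀ : ℕ) (S₀ : Finset ℕ),
      (∃ F ∈ 𝓖, ∃ l : List (Finset ℕ), (∀ A ∈ l, A ∈ 𝓖) ∧ l.length = j₀ ∧ S₀ = l.foldr (· ∩ ·) F) →
      ∀ d : ℕ, j₀ + 1 + d ≤ r →
      ∃ S : Finset ℕ,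
        (∃ F ∈ 𝓖, ∃ l : List (Finset ℕ), (∀ A ∈ l, A ∈ 𝓖) ∧ l.length = j₀ + d ∧ S = l.foldr (· ∩ ·) F)
        ∧ S.card + d ≤ S₀.card := by
    intro j₀ S₀ hrep d
    induction d with
    | zero => intro _; exact ⟨S₀, by simpa using hrep, by omega⟩
    | succ d ih =>
      intro hdr
      obtain ⟨S, ⟨F, hF, l, hl, hlen, hSe⟩, hScard⟩ := ih (by omega)
      have htS : t ≤ S.card := hSe ▸ inter_card r t hr 𝓖 hint F hF l hl (by omega)
      have hex : ∃ H ∈ 𝓖, ¬ S ⊆ H := by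
        by_contra hcon
        push_neg at hcon
        exact mkstar S htS hcon
      obtain ⟨H, hH, hHS⟩ := hex
      refine ⟨H ∩ S, ⟨F, hF, H :: l, ?_, by simp [hlen]; omega, by simp [hSe]⟩, ?_⟩
      · intro A hA
        rcases List.mem_cons.1 hA with h | h
        · exact h ▸ hH
        · exact hl A h
      · have hns : ¬ S ⊆ H ∩ S := fun h => hHS (h.trans Finset.inter_subset_left)
        have hlt := Finset.card_lt_card
          (Finset.ssubset_iff_subset_ne.2 ⟨Finset.inter_subset_right,
            fun h => hns (h ▸ Finset.Subset.refl S)⟩)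
        omega
  obtain ⟨F, hF⟩ := hne
  have hkF := hcard F hF
  -- k ≥ t + r - 1
  obtain ⟨S, ⟨F', hF', l, hl, hlen, hSe⟩, hSc⟩ :=
    key 0 F ⟨F, hF, [], by simp, rfl, rfl⟩ (r - 1) (by omega)
  have htS : t ≤ S.card := hSe ▸ inter_card r t hr 𝓖 hint F' hF' l hl (by omega)
  have hbound : t + r ≤ k + 1 := by omega
  by_cases hk : t + r ≤ k
  · exact Or.inl hk
  right
  have hkeq : k + 1 = t + r := by omega
  refine ⟨hkeq, ?_⟩
  have pair : ∀ G ∈ 𝓖, ∀ G' ∈ 𝓖, k ≤ (G ∩ G').card + 1 := by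
    intro G hG G' hG'
    obtain ⟨S2, ⟨F2, hF2, l2, hl2, hlen2, hSe2⟩, hSc2⟩ :=
      key 1 (G ∩ G') ⟨G', hG', [G], by simp [hG], rfl, by simp⟩ (r - 2) (by omega)
    have htS2 : t ≤ S2.card := hSe2 ▸ inter_card r t hr 𝓖 hint F2 hF2 l2 hl2 (by omega)
    omega
  have hdist : ∃ G' ∈ 𝓖, G' ≠ F := by
    by_contra h
    push_neg at h
    exact mkstar F (by omega) (fun H hH => (h H hH) ▸ Finset.Subset.refl _)
  obtain ⟨G', hG', hneq⟩ := hdist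
  have hkG' := hcard G' hG'
  have hFG' : (F ∩ G').card + 1 = k := by
    have h1 := pair F hF G' hG'
    have h2 : (F ∩ G').card ≤ k := hkF ▸ Finset.card_le_card Finset.inter_subset_left
    have h3 : (F ∩ G').card ≠ k := by
      intro hcc
      have h4 : F ∩ G' = F := Finset.eq_of_subset_of_card_le Finset.inter_subset_left (by omega)
      have h5 : F ⊆ G' := h4 ▸ Finset.inter_subset_right
      exact hneq (Finset.eq_of_subset_of_card_le h5 (by omega)).symm
    omega
  have hunion : (F ∪ G').card = k + 1 := by
    have := Finset.card_union_add_card_inter F G'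
    omega
  by_cases hY : ∀ H ∈ 𝓖, H ⊆ F ∪ G'
  · exact ⟨F ∪ G', Finset.union_subset (hsubI F hF) (hsubI G' hG'), hunion, hY⟩
  exfalso
  push_neg at hY
  obtain ⟨H, hH, hHn⟩ := hY
  obtain ⟨x, hxH, hxFG⟩ := Finset.not_subset.1 hHn
  have hxF : x ∉ F := fun h => hxFG (Finset.mem_union_left _ h)
  have hxG' : x ∉ G' := fun h => hxFG (Finset.mem_union_right _ h)
  have hkH := hcard H hH
  have hHe : (H.erase x).card + 1 = k := by rw [Finset.card_erase_of_mem hxH]; omega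
  have hHF : H ∩ F = H.erase x := by
    apply Finset.eq_of_subset_of_card_le
    · intro y hy
      rw [Finset.mem_inter] at hy
      exact Finset.mem_erase.2 ⟨fun he => hxF (he ▸ hy.2), hy.1⟩
    · have := pair H hH F hF
      omega
  have hHG' : H ∩ G' = H.erase x := by
    apply Finset.eq_of_subset_of_card_le
    · intro y hy
      rw [Finset.mem_inter] at hy
      exact Finset.mem_erase.2 ⟨fun he => hxG' (he ▸ hy.2), hy.1⟩
    · have := pair H hH G' hG'
      omega
  have hHeA : H.erase x = F ∩ G' := by
    apply Finset.eq_of_subset_of_card_le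
    · intro y hy
      refine Finset.mem_inter.2 ⟨?_, ?_⟩
      · exact (Finset.mem_inter.1 (hHF.symm ▸ hy : y ∈ H ∩ F)).2
      · exact (Finset.mem_inter.1 (hHG'.symm ▸ hy : y ∈ H ∩ G')).2
    · omega
  have hAH : F ∩ G' ⊆ H := hHeA ▸ Finset.erase_subset x H
  -- every K ∈ 𝓖 contains F ∩ G'
  have hall : ∀ K ∈ 𝓖, F ∩ G' ⊆ K := by
    intro K hK
    by_contra hnc
    obtain ⟨c, hcA, hcK⟩ := Finset.not_subset.1 hnc
    have hcF : c ∈ F := (Finset.mem_inter.1 hcA).1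
    have hcG' : c ∈ G' := (Finset.mem_inter.1 hcA).2
    have hcH : c ∈ H := hAH hcA
    have hkK := hcard K hK
    have herase : ∀ E ∈ 𝓖, E.card = k → c ∈ E → E.erase c ⊆ K := by
      intro E hE hEk hcE
      have h1 : K ∩ E ⊆ E.erase c := by
        intro y hy
        rw [Finset.mem_inter] at hy
        exact Finset.mem_erase.2 ⟨fun he => hcK (he ▸ hy.1), hy.2⟩
      have h2 := pair K hK E hE
      have h3 : (E.erase c).card + 1 = k := by rw [Finset.card_erase_of_mem hcE]; omega
      have h4 : K ∩ E = E.erase c := Finset.eq_of_subset_of_card_le h1 (by omega)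
      exact h4 ▸ Finset.inter_subset_left
    have hFsub := herase F hF hkF hcF
    have hG'sub := herase G' hG' hkG' hcG'
    have hHsub := herase H hH hkH hcH
    have hW : (insert x (F ∪ G')).erase c ⊆ K := by
      intro y hy
      obtain ⟨hyne, hyW⟩ := Finset.mem_erase.1 hy
      rcases Finset.mem_insert.1 hyW with rfl | hyFG
      · exact hHsub (Finset.mem_erase.2 ⟨fun he => hxF (he ▸ hcF), hxH⟩)
      · rcases Finset.mem_union.1 hyFG with h | h
        · exact hFsub (Finset.mem_erase.2 ⟨hyne, h⟩)
        · exact hG'sub (Finset.mem_erase.2 ⟨hyne, h⟩)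
    have hWcard : ((insert x (F ∪ G')).erase c).card = k + 1 := by
      rw [Finset.card_erase_of_mem (Finset.mem_insert_of_mem (Finset.mem_union_left _ hcF)),
        Finset.card_insert_of_notMem hxFG, hunion]
      omega
    have := Finset.card_le_card hW
    omega
  exact mkstar (F ∩ G') (by omega) hall
end

section
/- Let r ≥ 2, t ≥ 1, and let 𝓕 be a shifted family of k-element subsets of [n]. Then 𝓕 is r-wise t-intersecting if and only if for every choice of (not necessarily distinct) F₁,…,F_r ∈ 𝓕 there exists an integer s with 1 ≤ s ≤ n such that |F₁ ∩ [s]| + |F₂ ∩ [s]| + ⋯ + |F_r ∩ [s]| ≥ (r−1)·s + t. -/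
/-- A family of subsets of `[n]` is shifted if for every `F` in the family and all
`1 ≤ i < j ≤ n` with `j ∈ F`, `i ∉ F`, the set `(F \ {j}) ∪ {i}` is also in the family. -/
def Shifted (n : ℕ) (𝓕 : Finset (Finset ℕ)) : Prop :=
  ∀ F ∈ 𝓕, ∀ i j : ℕ, 1 ≤ i → i < j → j ≤ n → j ∈ F → i ∉ F →
    insert i (F.erase j) ∈ 𝓕

open Finset Function

section General

variable {ι α β : Type*} [Fintype ι] [DecidableEq α]

theorem card_le_sum_card_sdiff_add_card_inter_inf' [Nonempty ι] (S : Finset α)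
    (A : ι → Finset α) :
    #S ≤ ∑ i, #(S \ A i) + #(S ∩ univ.inf' univ_nonempty A) := by
  have hunion : S \ univ.inf' univ_nonempty A ⊆ univ.biUnion fun i => S \ A i := by
    intro a ha
    simp only [mem_sdiff, mem_inf', mem_univ, true_implies, not_forall] at ha
    obtain ⟨ha, i, hai⟩ := ha
    exact mem_biUnion.2 ⟨i, mem_univ i, mem_sdiff.2 ⟨ha, hai⟩⟩
  have := (card_le_card hunion).trans card_biUnion_le
  have := card_sdiff_add_card_inter S (univ.inf' univ_nonempty A)
  omega

theorem ncard_iInter_coe [Nonempty ι] (G : ι → Finset α) :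
    (⋂ i, (G i : Set α)).ncard = #(univ.inf' univ_nonempty G) := by
  rw [← Set.ncard_coe_finset]
  congr 1
  ext a
  simp

theorem sum_insert_erase_add [AddCommMonoid β] {F : Finset α} {x y : α} (hx : x ∈ F) (hy : y ∉ F)
    (φ : α → β) : ∑ a ∈ insert y (F.erase x), φ a + φ x = ∑ a ∈ F, φ a + φ y := by
  rw [sum_insert fun h => hy (mem_of_mem_erase h), add_assoc, sum_erase_add F φ hx, add_comm]

theorem card_sdiff_insert_erase_add {T F : Finset α} {x y : α} (hx : x ∈ F) (hy : y ∉ F) :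
    #(T \ insert y (F.erase x)) + (if y ∈ T then 1 else 0) = #(T \ F) + if x ∈ T then 1 else 0 := by
  have key := sum_insert_erase_add (β := ℕ) hx hy fun a => if a ∈ T then 1 else 0
  simp only [sum_boole, filter_mem_eq_inter, Nat.cast_id] at key
  have h₁ := card_sdiff_add_card_inter T (insert y (F.erase x))
  have h₂ := card_sdiff_add_card_inter T F
  rw [inter_comm] at h₁ h₂
  omega

theorem sum_apply_update_add {γ : Type*} [DecidableEq ι] [AddCommMonoid β] (ψ : γ → β)
    (G : ι → γ) (i : ι) (N : γ) : ∑ j, ψ (update G i N j) + ψ (G i) = ∑ j, ψ (G j) + ψ N := by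
  simp_rw [apply_update (fun _ => ψ)]
  rw [sum_update_of_mem (mem_univ i), sdiff_singleton_eq_erase, add_assoc,
    sum_erase_add _ _ (mem_univ i), add_comm]

end General

section Tuples

variable {r : ℕ}

def deficit (G : Fin r → Finset ℕ) (s : ℕ) : ℕ := ∑ i, #(Icc 1 s \ G i)

def weight (G : Fin r → Finset ℕ) : ℕ := ∑ i, ∑ a ∈ G i, a

theorem sum_card_inter_Icc_add_deficit (G : Fin r → Finset ℕ) (s : ℕ) :
    ∑ i, #(G i ∩ Icc 1 s) + deficit G s = r * s := by
  rw [deficit, ← sum_add_distrib]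
  simp_rw [inter_comm (G _), card_inter_add_card_sdiff]
  simp

theorem le_sum_card_inter_Icc_iff (hr : 0 < r) (G : Fin r → Finset ℕ) (s t : ℕ) :
    (r - 1) * s + t ≤ ∑ i, #(G i ∩ Icc 1 s) ↔ deficit G s + t ≤ s := by
  have hrs : (r - 1) * s + s = r * s := by
    rw [← Nat.succ_mul, Nat.succ_eq_add_one, Nat.sub_add_cancel hr]
  have := sum_card_inter_Icc_add_deficit G s
  omega

theorem le_card_inf'_of_deficit_add_le [NeZero r] {G : Fin r → Finset ℕ} {s t : ℕ}
    (h : deficit G s + t ≤ s) : t ≤ #(univ.inf' univ_nonempty G) := by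
  have hcount := card_le_sum_card_sdiff_add_card_inter_inf' (Icc 1 s) G
  have := card_le_card (inter_subset_right (s₁ := Icc 1 s) (s₂ := univ.inf' univ_nonempty G))
  rw [Nat.card_Icc] at hcount
  rw [deficit] at h
  omega

theorem deficit_shift_add {G : Fin r → Finset ℕ} {i : Fin r} {x y : ℕ} (hx : x ∈ G i)
    (hy : y ∉ G i) (s : ℕ) :
    deficit (update G i (insert y ((G i).erase x))) s + (if y ∈ Icc 1 s then 1 else 0) =
      deficit G s + if x ∈ Icc 1 s then 1 else 0 := by
  have hupd := sum_apply_update_add (fun F => #(Icc 1 s \ F)) G i (insert y ((G i).erase x))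
  have hset := card_sdiff_insert_erase_add (T := Icc 1 s) hx hy
  simp only [deficit]
  omega

theorem weight_shift_add {G : Fin r → Finset ℕ} {i : Fin r} {x y : ℕ} (hx : x ∈ G i)
    (hy : y ∉ G i) : weight (update G i (insert y ((G i).erase x))) + x = weight G + y := by
  have hupd := sum_apply_update_add (fun F => ∑ a ∈ F, a) G i (insert y ((G i).erase x))
  have hset := sum_insert_erase_add hx hy id
  simp only [weight, id] at hupd hset ⊢
  omega

theorem deficit_eq_of_Ioc_subset {G : Fin r → Finset ℕ} {s x : ℕ} (hsx : s ≤ x)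
    (h : ∀ j, Ioc s x ⊆ G j) : deficit G s = deficit G x := by
  refine sum_congr rfl fun j _ => congrArg card <| ext fun a => ?_
  have := @h j a
  simp only [mem_sdiff, mem_Icc, mem_Ioc] at this ⊢
  constructor
  · rintro ⟨⟨ha1, has⟩, haG⟩
    exact ⟨⟨ha1, has.trans hsx⟩, haG⟩
  · rintro ⟨⟨ha1, hax⟩, haG⟩
    exact ⟨⟨ha1, not_lt.1 fun has => haG (this ⟨has, hax⟩)⟩, haG⟩

theorem exists_maximal_hole {G : Fin r → Finset ℕ} {x : ℕ} (hx : ∀ j, x ∈ G j)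
    (hD : 0 < deficit G x) : ∃ y i, 1 ≤ y ∧ y < x ∧ y ∉ G i ∧ ∀ j, Ioc y x ⊆ G j := by
  set H := {a ∈ Icc 1 x | ∃ j, a ∉ G j}
  have hH : H.Nonempty := by
    obtain ⟨i, -, hi⟩ := exists_lt_of_sum_lt (sum_const_zero.trans_lt hD)
    obtain ⟨a, ha⟩ := card_pos.1 hi
    exact ⟨a, mem_filter.2 ⟨(mem_sdiff.1 ha).1, i, (mem_sdiff.1 ha).2⟩⟩
  obtain ⟨hy, i, hyi⟩ := mem_filter.1 (H.max'_mem hH)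
  obtain ⟨hy1, hyx⟩ := mem_Icc.1 hy
  refine ⟨H.max' hH, i, hy1, hyx.lt_of_ne fun h => hyi (h ▸ hx i), hyi, fun j z hz => ?_⟩
  obtain ⟨hyz, hzx⟩ := mem_Ioc.1 hz
  by_contra hzj
  have hzH : z ∈ H := mem_filter.2 ⟨mem_Icc.2 ⟨hy1.trans hyz.le, hzx⟩, j, hzj⟩
  exact absurd (H.le_max' z hzH) (not_le.2 hyz)

end Tuples

section ShiftedFamilies

variable {n r t : ℕ} {𝓕 : Finset (Finset ℕ)}

theorem exists_lt_weight_of_forall_lt_deficit [NeZero r] (h𝓕 : ∀ F ∈ 𝓕, F ⊆ Icc 1 n)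
    (hsh : Shifted n 𝓕) (ht : 1 ≤ t) {G : Fin r → Finset ℕ} (hG : ∀ i, G i ∈ 𝓕)
    (hcommon : t ≤ #(univ.inf' univ_nonempty G))
    (hviol : ∀ s, 1 ≤ s → s ≤ n → s < deficit G s + t) :
    ∃ G' : Fin r → Finset ℕ, (∀ i, G' i ∈ 𝓕) ∧
      (∀ s, 1 ≤ s → s ≤ n → s < deficit G' s + t) ∧ weight G' < weight G := by
  set I := univ.inf' univ_nonempty G
  have hI : I.Nonempty := card_pos.1 (by omega)
  set x := I.max' hI
  have hxG : ∀ j, x ∈ G j := by simpa [I] using I.max'_mem hI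
  have hx : x ∈ Icc 1 n := h𝓕 _ (hG 0) (hxG 0)
  have hIx : I ⊆ Icc 1 x := fun a ha => by
    have haG : ∀ j, a ∈ G j := by simpa [I] using ha
    exact mem_Icc.2 ⟨(mem_Icc.1 (h𝓕 _ (hG 0) (haG 0))).1, I.le_max' a ha⟩
  have htx : t ≤ x := by simpa using hcommon.trans (card_le_card hIx)
  have hDx : x < deficit G x + t := hviol x (mem_Icc.1 hx).1 (mem_Icc.1 hx).2
  obtain ⟨y, i, hy1, hyx, hyi, hIoc⟩ := exists_maximal_hole hxG (by omega)
  refine ⟨update G i (insert y ((G i).erase x)), ?_, fun s hs1 hsn => ?_, ?_⟩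
  · exact (forall_update_iff G fun _ F => F ∈ 𝓕).2
      ⟨hsh _ (hG i) y x hy1 hyx (mem_Icc.1 hx).2 (hxG i) hyi, fun j _ => hG j⟩
  · have hshift := deficit_shift_add (hxG i) hyi s
    simp only [mem_Icc] at hshift
    by_cases hmid : y ≤ s ∧ s < x
    · have := deficit_eq_of_Ioc_subset hmid.2.le fun j =>
        (Ioc_subset_Ioc_left hmid.1).trans (hIoc j)
      split_ifs at hshift <;> omega
    · have := hviol s hs1 hsn
      split_ifs at hshift <;> omega
  · have := weight_shift_add (hxG i) hyi
    omega

theorem exists_deficit_add_le_of_shifted [NeZero r] (h𝓕 : ∀ F ∈ 𝓕, F ⊆ Icc 1 n)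
    (hsh : Shifted n 𝓕) (ht : 1 ≤ t)
    (hint : ∀ G : Fin r → Finset ℕ, (∀ i, G i ∈ 𝓕) → t ≤ #(univ.inf' univ_nonempty G))
    (G : Fin r → Finset ℕ) (hG : ∀ i, G i ∈ 𝓕) : ∃ s, 1 ≤ s ∧ s ≤ n ∧ deficit G s + t ≤ s := by
  induction hw : weight G using Nat.strong_induction_on generalizing G with
  | _ w ih =>
    by_contra! hviol
    obtain ⟨G', hG', hviol', hlt⟩ :=
      exists_lt_weight_of_forall_lt_deficit h𝓕 hsh ht hG (hint G hG) hviol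
    obtain ⟨s, hs1, hsn, hs⟩ := ih _ (hw ▸ hlt) G' hG' rfl
    exact absurd (hviol' s hs1 hsn) (not_lt.2 hs)

end ShiftedFamilies

theorem shifted_rwise_intersecting_iff
    (n k r t : ℕ) (hr : 2 ≤ r) (ht : 1 ≤ t)
    (𝓕 : Finset (Finset ℕ))
    (h𝓕 : 𝓕 ⊆ Finset.powersetCard k (Finset.Icc 1 n))
    (hsh : Shifted n 𝓕) :
    RwiseIntersecting r t 𝓕 ↔
      ∀ G : Fin r → Finset ℕ, (∀ i, G i ∈ 𝓕) →
        ∃ s : ℕ, 1 ≤ s ∧ s ≤ n ∧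
          (r - 1) * s + t ≤ ∑ i : Fin r, ((G i) ∩ Finset.Icc 1 s).card := by
  have : NeZero r := ⟨by omega⟩
  have h𝓕n : ∀ F ∈ 𝓕, F ⊆ Icc 1 n := fun F hF => (mem_powersetCard.1 (h𝓕 hF)).1
  simp only [RwiseIntersecting, ncard_iInter_coe, le_sum_card_inter_Icc_iff (by omega : 0 < r)]
  refine ⟨exists_deficit_add_le_of_shifted h𝓕n hsh ht, fun h G hG => ?_⟩
  obtain ⟨s, -, -, hs⟩ := h G hG
  exact le_card_inf'_of_deficit_add_le hs
end

section
/- Let r ≥ 2, t ≥ 1, and let 𝓕 be a shifted r-wise t-intersecting family of k-element subsets of [n]. Then for every F ∈ 𝓕 there exists an integer i ≥ 0 such that |F ∩ [t + r·i]| ≥ t + (r−1)·i. -/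
open Finset

theorem Shifted.sdiff_union_image_mem {n : ℕ} {𝓕 : Finset (Finset ℕ)} (h : Shifted n 𝓕)
    {F A : Finset ℕ} {f : ℕ → ℕ} (hF : F ∈ 𝓕) (hAF : A ⊆ F) (hAn : ∀ a ∈ A, a ≤ n)
    (hf : Set.InjOn f A) (hfA : ∀ a ∈ A, 1 ≤ f a ∧ f a < a ∧ f a ∉ F) :
    F \ A ∪ A.image f ∈ 𝓕 := by
  induction A using Finset.induction_on with
  | empty => simpa using hF
  | @insert a A ha ih =>
    have haA : a ∈ insert a A := mem_insert_self a A
    obtain ⟨hfa1, hfaa, hfaF⟩ := hfA a haA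
    have hfaA : f a ∉ A.image f := by
      simp only [mem_image, not_exists, not_and]
      exact fun b hb hba => ha (hf (by simp [hb]) (by simp) hba ▸ hb)
    have hG := h _ (ih (insert_subset_iff.mp hAF).2 (fun b hb => hAn b (mem_insert_of_mem hb))
      (hf.mono (by simp)) (fun b hb => hfA b (mem_insert_of_mem hb)))
      (f a) a hfa1 hfaa (hAn a haA) (by simp [ha, hAF haA]) (by simp [hfaF, hfaA])
    convert hG using 1
    ext x
    simp only [image_insert, mem_union, mem_sdiff, mem_insert, mem_erase]
    grind

namespace Finset

def rank (F : Finset ℕ) (x : ℕ) : ℕ := Nat.count (· ∈ F) x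

-- `F.missing 0` is the least positive integer not in `F`.
noncomputable def missing (F : Finset ℕ) : ℕ → ℕ := Nat.nth (fun x => 0 < x ∧ x ∉ F)

variable (F : Finset ℕ)

theorem rank_injOn : Set.InjOn F.rank F := fun _ ha _ hb => Nat.count_injective ha hb

theorem card_filter_rank_lt_le (p : ℕ) : #{x ∈ F | F.rank x < p} ≤ p := by
  simpa using card_le_card_of_injOn (t := range p) F.rank
    (fun x hx => by simpa using (mem_filter.mp hx).2) (F.rank_injOn.mono (filter_subset _ _))

theorem missing_pos (m : ℕ) : 0 < F.missing m :=
  (Nat.nth_mem_of_infinite ((Set.Ioi_infinite 0).sdiff F.finite_toSet) m).1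

theorem missing_notMem (m : ℕ) : F.missing m ∉ F :=
  (Nat.nth_mem_of_infinite ((Set.Ioi_infinite 0).sdiff F.finite_toSet) m).2

theorem missing_strictMono : StrictMono F.missing :=
  Nat.nth_strictMono ((Set.Ioi_infinite 0).sdiff F.finite_toSet)

theorem missing_le_of_lt_card {m T : ℕ} (hm : m < #(Icc 1 T \ F)) : F.missing m ≤ T := by
  have : m < Nat.count (fun x => 0 < x ∧ x ∉ F) (T + 1) := by
    rw [Nat.count_eq_card_filter_range]
    convert hm using 2
    ext x
    simp only [mem_filter, mem_range, mem_sdiff, mem_Icc]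
    grind
  exact Nat.lt_succ_iff.mp (Nat.nth_lt_of_lt_count this)

variable {F}

theorem rank_lt_card_inter_Icc (hF0 : 0 ∉ F) {x T : ℕ} (hx : x ∈ F) (hxT : x ≤ T) :
    F.rank x < #(F ∩ Icc 1 T) := by
  have hT : #(F ∩ Icc 1 T) = Nat.count (· ∈ F) (T + 1) := by
    rw [Nat.count_eq_card_filter_range]
    congr 1
    ext y
    simp only [mem_inter, mem_Icc, mem_filter, mem_range]
    constructor
    · rintro ⟨hy, -, hyT⟩; exact ⟨by omega, hy⟩
    · rintro ⟨hyT, hy⟩; exact ⟨hy, Nat.pos_of_ne_zero (by rintro rfl; exact hF0 hy), by omega⟩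
  rw [hT]
  exact Nat.count_strict_mono hx (by omega)

variable (F) (p q : ℕ)

def rankClass (s : ℕ) : Finset ℕ := {x ∈ F | p ≤ F.rank x ∧ (F.rank x - p) % q = s}

noncomputable def shiftDown (x : ℕ) : ℕ := F.missing ((F.rank x - p) / q)

/-- The element of `F` of rank `p + q * m + s` with `s < q` is moved down to `F.missing m`
in the `s`-th copy; all other elements stay. -/
noncomputable def shiftedCopy (s : ℕ) : Finset ℕ :=
  F \ F.rankClass p q s ∪ (F.rankClass p q s).image (F.shiftDown p q)

variable {F p q}

theorem shiftDown_lt (hF0 : 0 ∉ F)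
    (hsparse : ∀ i, #(F ∩ Icc 1 (p + 1 + (q + 1) * i)) < p + 1 + q * i)
    {x : ℕ} (hx : x ∈ F) (hpx : p ≤ F.rank x) : F.shiftDown p q x < x := by
  obtain ⟨m, hm⟩ : ∃ m, (F.rank x - p) / q = m := ⟨_, rfl⟩
  have hqm : q * m ≤ F.rank x - p := hm ▸ Nat.mul_div_le _ _
  obtain ⟨T, hT⟩ : ∃ T, p + 1 + (q + 1) * m = T := ⟨_, rfl⟩
  have hT' : T = p + 1 + q * m + m := by rw [← hT]; ring
  have hsparse := hT ▸ hsparse m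
  have hmissing : F.missing m ≤ T := by
    apply missing_le_of_lt_card
    have := card_sdiff_add_card_inter (Icc 1 T) F
    rw [Nat.card_Icc, inter_comm] at this
    omega
  have hTx : T < x := by
    by_contra! hxT
    have := rank_lt_card_inter_Icc hF0 hx hxT
    omega
  rw [shiftDown, hm]
  exact hmissing.trans_lt hTx

theorem injOn_shiftDown_rankClass (s : ℕ) : Set.InjOn (F.shiftDown p q) (F.rankClass p q s) := by
  intro a ha b hb hab
  obtain ⟨haF, hpa, has⟩ := mem_filter.mp ha
  obtain ⟨hbF, hpb, hbs⟩ := mem_filter.mp hb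
  have hdiv : (F.rank a - p) / q = (F.rank b - p) / q := F.missing_strictMono.injective hab
  have ha' := Nat.div_add_mod (F.rank a - p) q
  have hb' := Nat.div_add_mod (F.rank b - p) q
  refine F.rank_injOn haF hbF ?_
  rw [hdiv, has, ← hbs] at ha'
  omega

theorem shiftedCopy_mem {n : ℕ} {𝓕 : Finset (Finset ℕ)} (hsh : Shifted n 𝓕) (hF : F ∈ 𝓕)
    (hFn : F ⊆ Icc 1 n) (hsparse : ∀ i, #(F ∩ Icc 1 (p + 1 + (q + 1) * i)) < p + 1 + q * i)
    (s : ℕ) : F.shiftedCopy p q s ∈ 𝓕 := by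
  have hF0 : 0 ∉ F := fun h => by simpa using hFn h
  refine Shifted.sdiff_union_image_mem hsh hF (filter_subset _ _)
    (fun x hx => (mem_Icc.mp (hFn (mem_filter.mp hx).1)).2) (injOn_shiftDown_rankClass s) ?_
  intro x hx
  obtain ⟨hxF, hpx, -⟩ := mem_filter.mp hx
  exact ⟨F.missing_pos _, shiftDown_lt hF0 hsparse hxF hpx, F.missing_notMem _⟩

theorem rank_lt_of_forall_mem_shiftedCopy (hq : 0 < q) {x : ℕ} (hx : x ∈ F)
    (hcopies : ∀ s < q, x ∈ F.shiftedCopy p q s) : F.rank x < p := by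
  by_contra! hpx
  have hxs : x ∈ F.rankClass p q ((F.rank x - p) % q) := mem_filter.mpr ⟨hx, hpx, rfl⟩
  rcases mem_union.mp (hcopies _ (Nat.mod_lt _ hq)) with hx' | hx'
  · exact (mem_sdiff.mp hx').2 hxs
  · obtain ⟨y, -, rfl⟩ := mem_image.mp hx'
    exact F.missing_notMem _ hx

end Finset

theorem shifted_rwise_intersecting_hits_line
    (n k r t : ℕ) (hr : 2 ≤ r) (ht : 1 ≤ t)
    (𝓕 : Finset (Finset ℕ))
    (h𝓕 : 𝓕 ⊆ Finset.powersetCard k (Finset.Icc 1 n))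
    (hsh : Shifted n 𝓕)
    (hint : RwiseIntersecting r t 𝓕) :
    ∀ F ∈ 𝓕, ∃ i : ℕ, t + (r - 1) * i ≤ (F ∩ Finset.Icc 1 (t + r * i)).card := by
  intro F hF
  have hFn : F ⊆ Icc 1 n := (mem_powersetCard.mp (h𝓕 hF)).1
  by_contra! hsparse
  obtain ⟨q, rfl⟩ : ∃ q, r = q + 1 := ⟨r - 1, by omega⟩
  obtain ⟨p, rfl⟩ : ∃ p, t = p + 1 := ⟨t - 1, by omega⟩
  simp only [Nat.add_sub_cancel] at hsparse
  let G : Fin (q + 1) → Finset ℕ := Fin.cons F fun s => F.shiftedCopy p q s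
  have hG : ∀ i, G i ∈ 𝓕 := Fin.cases hF fun s => shiftedCopy_mem hsh hF hFn hsparse s
  have hsub : ⋂ i, (G i : Set ℕ) ⊆ ↑{x ∈ F | F.rank x < p} := by
    intro x hx
    simp only [Set.mem_iInter, mem_coe] at hx
    have hxF : x ∈ F := hx 0
    have hq : 0 < q := by omega
    refine mem_filter.mpr ⟨hxF, rank_lt_of_forall_mem_shiftedCopy hq hxF fun s hs => ?_⟩
    simpa only [G, Fin.cons_succ] using hx (Fin.succ ⟨s, hs⟩)
  have := (hint G hG).trans (Set.ncard_le_ncard hsub (finite_toSet _))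
  rw [Set.ncard_coe_finset] at this
  have := card_filter_rank_lt_le F p
  omega
end

section
/- Let r ≥ 3 and 2 ≤ s < r, and let 𝓕 be an r-wise t-intersecting family of subsets of [n] that is not a t-star, i.e., there is no t-element set contained in every member of 𝓕. Then 𝓕 is s-wise (t + r − s)-intersecting. -/
def IsStar {α : Type*} (t : ℕ) (𝓕 : Finset (Finset α)) : Prop :=
  ∃ T : Finset α, T.card = t ∧ ∀ F ∈ 𝓕, T ⊆ F

theorem IsStar.of_subset_all {α : Type*} {t : ℕ} {𝓕 : Finset (Finset α)} {X : Set α}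
    (hX : X.Finite) (hcard : t ≤ X.ncard) (hsub : ∀ F ∈ 𝓕, X ⊆ F) : IsStar t 𝓕 := by
  obtain ⟨T, hTX, hT⟩ := Set.exists_subset_card_eq hcard
  lift T to Finset α using hX.subset hTX
  exact ⟨T, by simpa using hT, fun F hF => mod_cast hTX.trans (hsub F hF)⟩

theorem Finset.iInter_coe_finSnoc {α : Type*} {k : ℕ} (H : Fin k → Finset α) (F : Finset α) :
    ⋂ i, (Fin.snoc (α := fun _ => Finset α) H F i : Set α) = (⋂ i, (H i : Set α)) ∩ F := by
  ext x
  simp [Fin.forall_fin_succ']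

theorem Finset.finite_iInter_coe {α : Type*} {k : ℕ} (hk : 0 < k) (H : Fin k → Finset α) :
    (⋂ i, (H i : Set α)).Finite :=
  (H ⟨0, hk⟩).finite_toSet.subset (Set.iInter_subset _ _)

namespace RwiseIntersecting

variable {r k t : ℕ} {𝓕 : Finset (Finset ℕ)}

theorem of_le (h : RwiseIntersecting r t 𝓕) (hk : 0 < k) (hkr : k ≤ r) :
    RwiseIntersecting k t 𝓕 := by
  intro H hH
  let f : Fin r → Fin k := fun i => ⟨min i (k - 1), by omega⟩
  have hf : f.Surjective := fun j => ⟨Fin.castLE hkr j, Fin.ext (by simp [f]; omega)⟩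
  rw [← hf.iInter_comp fun j => (H j : Set ℕ)]
  exact h (H ∘ f) fun i => hH (f i)

theorem succ_of_not_isStar {m : ℕ} (hsucc : RwiseIntersecting (k + 1) m 𝓕)
    (ht : RwiseIntersecting k t 𝓕) (hk : 0 < k) (hstar : ¬ IsStar t 𝓕) :
    RwiseIntersecting k (m + 1) 𝓕 := by
  intro H hH
  set X := ⋂ i, (H i : Set ℕ)
  have hX : X.Finite := Finset.finite_iInter_coe hk H
  obtain ⟨F, hF, hXF⟩ : ∃ F ∈ 𝓕, ¬ X ⊆ F := by
    by_contra! hsub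
    exact hstar (IsStar.of_subset_all hX (ht H hH) hsub)
  have hm : m ≤ (X ∩ F).ncard := by
    rw [← Finset.iInter_coe_finSnoc]
    exact hsucc _ (Fin.lastCases (by simpa using hF) (by simpa using hH))
  have hlt : (X ∩ F).ncard < X.ncard :=
    Set.ncard_lt_ncard (Set.inter_subset_left.ssubset_of_not_subset
      fun h => hXF fun _ hx => (h hx).2) hX
  omega

theorem of_not_isStar (h : RwiseIntersecting r t 𝓕) (hstar : ¬ IsStar t 𝓕)
    (hk : 0 < k) (hkr : k ≤ r) : RwiseIntersecting k (t + (r - k)) 𝓕 := by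
  induction hkr using Nat.decreasingInduction with
  | self => simpa using h
  | of_succ k hkr ih =>
    rw [show t + (r - k) = t + (r - (k + 1)) + 1 by omega]
    exact succ_of_not_isStar (ih k.succ_pos) (h.of_le hk hkr.le) hk hstar

end RwiseIntersecting

theorem rwise_intersecting_not_star_swise_general
    (r s t : ℕ) (hs : 2 ≤ s) (hsr : s < r)
    (𝓕 : Finset (Finset ℕ))
    (hint : RwiseIntersecting r t 𝓕)
    (hstar : ¬ ∃ T : Finset ℕ, T.card = t ∧ ∀ F ∈ 𝓕, T ⊆ F) :
    RwiseIntersecting s (t + r - s) 𝓕 := by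
  rw [Nat.add_sub_assoc hsr.le]
  exact hint.of_not_isStar hstar (by omega) hsr.le

theorem rwise_intersecting_not_star_swise
    (n r s t : ℕ) (hr : 3 ≤ r) (hs : 2 ≤ s) (hsr : s < r) (ht : 1 ≤ t)
    (𝓕 : Finset (Finset ℕ))
    (h𝓕 : ∀ F ∈ 𝓕, F ⊆ Finset.Icc 1 n)
    (hint : RwiseIntersecting r t 𝓕)
    (hstar : ¬ ∃ T : Finset ℕ, T.card = t ∧ ∀ F ∈ 𝓕, T ⊆ F) :
    RwiseIntersecting s (t + r - s) 𝓕 :=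
  rwise_intersecting_not_star_swise_general r s t hs hsr 𝓕 hint hstar
end

section
/- Fix integers r ≥ 2, t ≥ 1, n ≥ 1, and for 0 ≤ i ≤ n let 𝓖_i be the family of all i-element subsets F of [n] such that there exists an integer j ≥ 0 with |F ∩ [t + r·j]| ≥ t + (r−1)·j. Then for every 0 ≤ i < n, |𝓖_i| / C(n,i) ≤ |𝓖_{i+1}| / C(n,i+1). -/
/-!
Having a hitting index `j` is preserved under enlarging `F`, so each `𝓖_i` is the `i`-th level
of an up-set in the power set of `[n]`. For an up-set, double counting the pairs `F ⊂ G` with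
`#G = #F + 1` gives `|𝓖_i| (n - i) ≤ |𝓖_{i+1}| (i + 1)`, and `C(n, i+1) (i + 1) = C(n, i) (n - i)`
turns this into monotonicity of the densities.
-/

/-- `hitFamily m i r t` is the family of all `i`-element subsets `F` of `[m]` such that
there exists `j ≥ 0` with `|F ∩ [t + r·j]| ≥ t + (r−1)·j`; in lattice-path terms,
it corresponds to the lattice paths from `(0,0)` to `(m−i,i)` hitting `y = (r−1)x + t`. -/
noncomputable def hitFamily (m i r t : ℕ) : Finset (Finset ℕ) := by
  classical
  exact (Finset.powersetCard i (Finset.Icc 1 m)).filter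
    (fun F => ∃ j : ℕ, t + (r - 1) * j ≤ (F ∩ Finset.Icc 1 (t + r * j)).card)

open Finset

section UpSet

variable {α : Type*} [DecidableEq α] {p : Finset α → Prop} [DecidablePred p]

theorem card_sdiff_le_card_filter_powersetCard_succ_superset (hp : Monotone p) {s F : Finset α}
    (hFs : F ⊆ s) (hF : p F) :
    #(s \ F) ≤ #(((s.powersetCard (#F + 1)).filter p).filter (F ⊆ ·)) := by
  have hinsert : Set.InjOn (insert · F) ↑(s \ F) := fun x hx y _ hxy =>
    (insert_inj (mem_sdiff.1 hx).2).1 hxy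
  rw [← card_image_of_injOn hinsert]
  refine card_le_card fun G hG => ?_
  obtain ⟨x, hx, rfl⟩ := mem_image.1 hG
  obtain ⟨hxs, hxF⟩ := mem_sdiff.1 hx
  simp only [mem_filter, mem_powersetCard, card_insert_of_notMem hxF, and_true]
  exact ⟨⟨insert_subset hxs hFs, hp (subset_insert x F) hF⟩, subset_insert x F⟩

theorem card_filter_powersetCard_mul_le (hp : Monotone p) (s : Finset α) (i : ℕ) :
    #((s.powersetCard i).filter p) * (#s - i) ≤
      #((s.powersetCard (i + 1)).filter p) * (i + 1) := by
  refine card_mul_le_card_mul (· ⊆ ·) (fun F hF => ?_) (fun G hG => ?_)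
  · obtain ⟨⟨hFs, rfl⟩, hpF⟩ := by simpa only [mem_filter, mem_powersetCard] using hF
    rw [← card_sdiff_of_subset hFs]
    exact card_sdiff_le_card_filter_powersetCard_succ_superset hp hFs hpF
  · obtain ⟨⟨-, hG⟩, -⟩ := by simpa only [mem_filter, mem_powersetCard] using hG
    calc #(((s.powersetCard i).filter p).bipartiteBelow (· ⊆ ·) G)
        ≤ #(G.powersetCard i) := card_le_card fun F hF => by
          simp only [bipartiteBelow, mem_filter, mem_powersetCard] at hF ⊢
          exact ⟨hF.2, hF.1.1.2⟩
      _ = i + 1 := by rw [card_powersetCard, hG, Nat.choose_succ_self_right]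

theorem card_filter_powersetCard_div_choose_le (hp : Monotone p) {s : Finset α} {i : ℕ}
    (hi : i < #s) :
    (#((s.powersetCard i).filter p) : ℝ) / (#s).choose i ≤
      #((s.powersetCard (i + 1)).filter p) / (#s).choose (i + 1) := by
  rw [div_le_div_iff₀ (mod_cast Nat.choose_pos hi.le) (mod_cast Nat.choose_pos hi)]
  have hmul : #((s.powersetCard i).filter p) * (#s).choose (i + 1) * (i + 1) ≤
      #((s.powersetCard (i + 1)).filter p) * (#s).choose i * (i + 1) :=
    calc #((s.powersetCard i).filter p) * (#s).choose (i + 1) * (i + 1)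
        = #((s.powersetCard i).filter p) * (#s - i) * (#s).choose i := by
          rw [mul_assoc, Nat.choose_succ_right_eq]; ring
      _ ≤ #((s.powersetCard (i + 1)).filter p) * (i + 1) * (#s).choose i :=
          Nat.mul_le_mul_right _ (card_filter_powersetCard_mul_le hp s i)
      _ = #((s.powersetCard (i + 1)).filter p) * (#s).choose i * (i + 1) := by ring
  exact_mod_cast Nat.le_of_mul_le_mul_right hmul i.succ_pos

end UpSet

theorem hitFamily_ratio_mono_in_size_general
    (n r t : ℕ) :
    ∀ i < n, ((hitFamily n i r t).card : ℝ) / (Nat.choose n i) ≤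
      ((hitFamily n (i + 1) r t).card : ℝ) / (Nat.choose n (i + 1)) := by
  classical
  intro i hi
  have hmono : Monotone fun F : Finset ℕ => ∃ j : ℕ, t + (r - 1) * j ≤ #(F ∩ Icc 1 (t + r * j)) :=
    fun F G hFG ⟨j, hj⟩ => ⟨j, hj.trans (card_le_card (inter_subset_inter_right hFG))⟩
  have hcard : #(Icc 1 n) = n := by simp
  have hdensity := card_filter_powersetCard_div_choose_le hmono (s := Icc 1 n) (hcard ▸ hi)
  rw [hcard] at hdensity
  convert hdensity using 4 <;> simp only [hitFamily]

theorem hitFamily_ratio_mono_in_size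
    (n r t : ℕ) (hr : 2 ≤ r) (ht : 1 ≤ t) (hn : 1 ≤ n) :
    ∀ i < n, ((hitFamily n i r t).card : ℝ) / (Nat.choose n i) ≤
      ((hitFamily n (i + 1) r t).card : ℝ) / (Nat.choose n (i + 1)) :=
  hitFamily_ratio_mono_in_size_general n r t
end

section
/- Let 𝓕 be a nonempty 3-wise t-intersecting family of k-element subsets of [n] with k ≥ t. If t ≥ 4 then |∂^(2)𝓕| > 4·|𝓕|, and if t ≥ 7 then |∂^(4)𝓕| > 16·|𝓕|. -/
/-- The `b`-th shadow of a family `𝓕` of `k`-element sets: all `(k−b)`-element sets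
contained in some member of `𝓕`. -/
def bShadow (k b : ℕ) (𝓕 : Finset (Finset ℕ)) : Finset (Finset ℕ) :=
  𝓕.biUnion (fun F => Finset.powersetCard (k - b) F)

/-
Shifting, i.e. applying the UV-compressions `{x} ← {y}` with `0 < x < y`, preserves the size, the
uniformity and the `r`-wise `t`-intersection property of a family and does not increase any iterated
shadow, so we may assume the family shifted. In a shifted `r`-wise `t`-intersecting family every
member `F` has a window: `|F ∩ [t + r i]| ≥ t + (r - 1) i` for some `i` (Frankl). Otherwise `F`
dominates, elementwise, each of the `r` sets formed by the first `|F|` positive integers avoiding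
the residue class `t + σ (mod r)` above `t`; shiftedness puts these sets in the family, yet they
meet only in `[t - 1]`. Finally, if every member of a `k`-uniform family on `[n]` has a window and
`2^b (i+1)⋯(i+b) < k(k-1)⋯(k-b+1)` whenever `t + (r - 1) i ≤ k` (for `r = 3`: true for `b = 2`,
`t ≥ 4` and for `b = 4`, `t ≥ 7`), then `|∂^(b) 𝓕| > 2^b |𝓕|`. This goes by induction on `n`,
splitting on whether `n` lies in a member, down to the case `n ≤ t + r i`, `t + (r - 1) i ≤ k`,
where the iterated local LYM inequality `|∂^(b) 𝓕| (n-k+1)⋯(n-k+b) ≥ |𝓕| k(k-1)⋯(k-b+1)` applies.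
-/

open Finset
open scoped FinsetFamily

namespace Finset

variable {α : Type*} [DecidableEq α] {𝒜 : Finset (Finset α)} {S : Finset α} {k : ℕ}

lemma shadow_iterate_subset_powersetCard (h𝒜 : 𝒜 ⊆ powersetCard k S) (b : ℕ) :
    ∂^[b] 𝒜 ⊆ powersetCard (k - b) S := by
  intro E hE
  obtain ⟨F, hF, hEF, hcard⟩ := mem_shadow_iterate_iff_exists_sdiff.1 hE
  obtain ⟨hFS, hFk⟩ := mem_powersetCard.1 (h𝒜 hF)
  rw [mem_powersetCard, ← hcard, card_sdiff_of_subset hEF, hFk]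
  exact ⟨hEF.trans hFS, by have := card_le_card hEF; omega⟩

lemma card_mul_le_card_shadow_mul_of_subset_powersetCard (h𝒜 : 𝒜 ⊆ powersetCard k S) :
    #𝒜 * k ≤ #(∂ 𝒜) * (#S - k + 1) := by
  classical
  refine card_mul_le_card_mul' (· ⊆ ·) (fun F hF => ?_) (fun E hE => ?_)
  · obtain ⟨-, hFk⟩ := mem_powersetCard.1 (h𝒜 hF)
    rw [← hFk, ← card_image_of_injOn F.erase_injOn]
    refine card_le_card fun E hE => ?_
    obtain ⟨a, ha, rfl⟩ := mem_image.1 hE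
    exact (mem_bipartiteBelow _).2 ⟨erase_mem_shadow hF ha, erase_subset _ _⟩
  · obtain ⟨F', hF', hEF', hEk⟩ := mem_shadow_iff_exists_mem_card_add_one.1 hE
    obtain ⟨hF'S, hF'k⟩ := mem_powersetCard.1 (h𝒜 hF')
    calc #(𝒜.bipartiteAbove (· ⊆ ·) E) ≤ #((S \ E).image (insert · E)) := by
          refine card_le_card fun F hF => ?_
          obtain ⟨hF𝒜, hEF⟩ := (mem_bipartiteAbove _).1 hF
          obtain ⟨hFS, hFk⟩ := mem_powersetCard.1 (h𝒜 hF𝒜)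
          obtain ⟨a, haE, rfl⟩ := exists_eq_insert_iff.2 ⟨hEF, by omega⟩
          exact mem_image_of_mem _ (mem_sdiff.2 ⟨hFS (mem_insert_self a E), haE⟩)
      _ ≤ #(S \ E) := card_image_le
      _ ≤ #S - k + 1 := by rw [card_sdiff_of_subset (hEF'.trans hF'S)]; omega

lemma card_mul_descFactorial_le_card_shadow_iterate_mul_ascFactorial
    (h𝒜 : 𝒜 ⊆ powersetCard k S) (b : ℕ) :
    #𝒜 * k.descFactorial b ≤ #(∂^[b] 𝒜) * (#S - k + 1).ascFactorial b := by
  induction b with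
  | zero => simp
  | succ b ih =>
    have hLYM := card_mul_le_card_shadow_mul_of_subset_powersetCard
      (shadow_iterate_subset_powersetCard h𝒜 b)
    rw [← Function.iterate_succ_apply' (f := shadow)] at hLYM
    calc #𝒜 * k.descFactorial (b + 1) = #𝒜 * k.descFactorial b * (k - b) := by
          rw [Nat.descFactorial_succ]; ring
      _ ≤ #(∂^[b] 𝒜) * (#S - k + 1).ascFactorial b * (k - b) := by gcongr
      _ = #(∂^[b] 𝒜) * (k - b) * (#S - k + 1).ascFactorial b := by ring
      _ ≤ #(∂^[b + 1] 𝒜) * (#S - (k - b) + 1) * (#S - k + 1).ascFactorial b := by gcongr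
      _ ≤ #(∂^[b + 1] 𝒜) * (#S - k + 1 + b) * (#S - k + 1).ascFactorial b :=
          Nat.mul_le_mul_right _ (Nat.mul_le_mul_left _ (by omega))
      _ = #(∂^[b + 1] 𝒜) * (#S - k + 1).ascFactorial (b + 1) := by
          rw [Nat.ascFactorial_succ]; ring

lemma card_shadow_iterate_nonMemberSubfamily_add_card_shadow_iterate_memberSubfamily_le
    (a : α) (𝒜 : Finset (Finset α)) (b : ℕ) :
    #(∂^[b] (𝒜.nonMemberSubfamily a)) + #(∂^[b] (𝒜.memberSubfamily a)) ≤ #(∂^[b] 𝒜) := by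
  have hnotMem : ∀ E ∈ ∂^[b] (𝒜.memberSubfamily a), a ∉ E := fun E hE haE => by
    obtain ⟨F, hF, hEF, -⟩ := mem_shadow_iterate_iff_exists_sdiff.1 hE
    exact (mem_memberSubfamily.1 hF).2 (hEF haE)
  have hinj : Set.InjOn (insert a) (∂^[b] (𝒜.memberSubfamily a) : Set (Finset α)) :=
    fun E hE E' hE' h => by rw [← erase_insert (hnotMem E hE), h, erase_insert (hnotMem E' hE')]
  have hdisj : Disjoint (∂^[b] (𝒜.nonMemberSubfamily a))
      ((∂^[b] (𝒜.memberSubfamily a)).image (insert a)) := by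
    refine disjoint_left.2 fun E hE hE' => ?_
    obtain ⟨F, hF, hEF, -⟩ := mem_shadow_iterate_iff_exists_sdiff.1 hE
    obtain ⟨E, -, rfl⟩ := mem_image.1 hE'
    exact (mem_nonMemberSubfamily.1 hF).2 (hEF (mem_insert_self a E))
  rw [← card_image_of_injOn hinj, ← card_union_of_disjoint hdisj]
  refine card_le_card (union_subset ((Monotone.iterate shadow_monotone b) (filter_subset _ _)) ?_)
  intro E' hE'
  obtain ⟨E, hE, rfl⟩ := mem_image.1 hE'
  obtain ⟨F, hF, hEF, hcard⟩ := mem_shadow_iterate_iff_exists_sdiff.1 hE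
  obtain ⟨hF𝒜, haF⟩ := mem_memberSubfamily.1 hF
  refine mem_shadow_iterate_iff_exists_sdiff.2 ⟨insert a F, hF𝒜, insert_subset_insert a hEF, ?_⟩
  rwa [insert_sdiff_insert, sdiff_insert_of_notMem haF]

lemma nonMemberSubfamily_subset_powersetCard (a : α) (h𝒜 : 𝒜 ⊆ powersetCard k S) :
    𝒜.nonMemberSubfamily a ⊆ powersetCard k (S.erase a) := fun A hA => by
  obtain ⟨hA𝒜, haA⟩ := mem_nonMemberSubfamily.1 hA
  obtain ⟨hAS, hAk⟩ := mem_powersetCard.1 (h𝒜 hA𝒜)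
  exact mem_powersetCard.2 ⟨subset_erase.2 ⟨hAS, haA⟩, hAk⟩

lemma memberSubfamily_subset_powersetCard (a : α) (h𝒜 : 𝒜 ⊆ powersetCard k S) :
    𝒜.memberSubfamily a ⊆ powersetCard (k - 1) (S.erase a) := fun A hA => by
  obtain ⟨hA𝒜, haA⟩ := mem_memberSubfamily.1 hA
  obtain ⟨hAS, hAk⟩ := mem_powersetCard.1 (h𝒜 hA𝒜)
  rw [card_insert_of_notMem haA] at hAk
  exact mem_powersetCard.2 ⟨subset_erase.2 ⟨(subset_insert a A).trans hAS, haA⟩, by omega⟩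

lemma mul_card_lt_card_shadow_iterate_of_mul_ascFactorial_lt {b c i : ℕ}
    (h𝒜 : 𝒜 ⊆ powersetCard k S) (hne : 𝒜.Nonempty) (hS : #S ≤ k + i)
    (hlt : c * (i + 1).ascFactorial b < k.descFactorial b) : c * #𝒜 < #(∂^[b] 𝒜) := by
  by_contra! h
  have : #𝒜 * k.descFactorial b ≤ #𝒜 * (c * (i + 1).ascFactorial b) :=
    calc #𝒜 * k.descFactorial b ≤ #(∂^[b] 𝒜) * (#S - k + 1).ascFactorial b :=
          card_mul_descFactorial_le_card_shadow_iterate_mul_ascFactorial h𝒜 b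
      _ ≤ c * #𝒜 * (i + 1).ascFactorial b := Nat.mul_le_mul h (Nat.ascFactorial_le _ (by omega))
      _ = #𝒜 * (c * (i + 1).ascFactorial b) := by ring
  exact hlt.not_ge (Nat.le_of_mul_le_mul_left this (card_pos.2 hne))

lemma mul_card_lt_card_shadow_iterate_of_subfamilies {a : α} {b c : ℕ} (hne : 𝒜.Nonempty)
    (h₀ : (𝒜.nonMemberSubfamily a).Nonempty →
      c * #(𝒜.nonMemberSubfamily a) < #(∂^[b] (𝒜.nonMemberSubfamily a)))
    (h₁ : (𝒜.memberSubfamily a).Nonempty →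
      c * #(𝒜.memberSubfamily a) < #(∂^[b] (𝒜.memberSubfamily a))) :
    c * #𝒜 < #(∂^[b] 𝒜) := by
  have hle : ∀ ℬ : Finset (Finset α), (ℬ.Nonempty → c * #ℬ < #(∂^[b] ℬ)) →
      c * #ℬ ≤ #(∂^[b] ℬ) := fun ℬ h => by
    rcases ℬ.eq_empty_or_nonempty with rfl | hℬ
    · simp
    · exact (h hℬ).le
  have hsplit := card_memberSubfamily_add_card_nonMemberSubfamily a 𝒜
  calc c * #𝒜 = c * #(𝒜.nonMemberSubfamily a) + c * #(𝒜.memberSubfamily a) := by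
        rw [← hsplit]; ring
    _ < #(∂^[b] (𝒜.nonMemberSubfamily a)) + #(∂^[b] (𝒜.memberSubfamily a)) := by
        rcases (𝒜.nonMemberSubfamily a).eq_empty_or_nonempty with h0 | h0
        · refine add_lt_add_of_le_of_lt (hle _ h₀) (h₁ (card_pos.1 ?_))
          have := card_pos.2 hne
          rw [h0, card_empty] at hsplit
          omega
        · exact add_lt_add_of_lt_of_le (h₀ h0) (hle _ h₁)
    _ ≤ #(∂^[b] 𝒜) :=
        card_shadow_iterate_nonMemberSubfamily_add_card_shadow_iterate_memberSubfamily_le _ _ _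

end Finset

namespace UV

section
variable {α : Type*} [DecidableEq α] {𝒜 : Finset (Finset α)} {x y : α}

lemma compress_singleton (x y : α) (A : Finset α) :
    compress {x} {y} A = if y ∈ A ∧ x ∉ A then insert x (A.erase y) else A := by
  simp only [compress, disjoint_singleton_left, singleton_subset_iff, and_comm]
  split_ifs with h
  · ext z
    simp only [sup_eq_union, mem_sdiff, mem_union, mem_singleton, mem_insert, mem_erase]
    grind
  · rfl

lemma compression_subset_powersetCard {S : Finset α} {k : ℕ} (hxy : y ∈ S → x ∈ S)
    (h𝒜 : 𝒜 ⊆ powersetCard k S) : 𝓒 {x} {y} 𝒜 ⊆ powersetCard k S := by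
  intro A hA
  rcases mem_compression.1 hA with ⟨hA, -⟩ | ⟨-, B, hB, rfl⟩
  · exact h𝒜 hA
  obtain ⟨hBS, hBk⟩ := mem_powersetCard.1 (h𝒜 hB)
  refine mem_powersetCard.2 ⟨?_, by rw [card_compress (by simp), hBk]⟩
  rw [compress_singleton]
  split_ifs with hpat
  exacts [insert_subset (hxy (hBS hpat.1)) ((erase_subset _ _).trans hBS), hBS]

lemma shadow_iterate_compression_subset (x y : α) (𝒜 : Finset (Finset α)) (b : ℕ) :
    ∂^[b] (𝓒 {x} {y} 𝒜) ⊆ 𝓒 {x} {y} (∂^[b] 𝒜) := by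
  induction b with
  | zero => exact Subset.rfl
  | succ b ih =>
    simp only [Function.iterate_succ_apply']
    refine (shadow_mono ih).trans (shadow_compression_subset_compression_shadow _ _ ?_)
    simp only [mem_singleton, exists_eq_left, erase_singleton, forall_eq, isCompressed_self]

lemma card_shadow_iterate_compression_le (x y : α) (𝒜 : Finset (Finset α)) (b : ℕ) :
    #(∂^[b] (𝓒 {x} {y} 𝒜)) ≤ #(∂^[b] 𝒜) :=
  (card_le_card (shadow_iterate_compression_subset x y 𝒜 b)).trans_eq (card_compression _ _ _)

lemma sum_compression_lt {β : Type*} [AddCommMonoid β] [PartialOrder β]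
    [IsOrderedCancelAddMonoid β] {u v : Finset α} {f : Finset α → β}
    (hf : ∀ A ∈ 𝒜, compress u v A ≠ A → f (compress u v A) < f A) (h : 𝓒 u v 𝒜 ≠ 𝒜) :
    ∑ A ∈ 𝓒 u v 𝒜, f A < ∑ A ∈ 𝒜, f A := by
  set 𝒜' := {A ∈ 𝒜 | compress u v A ∉ 𝒜}
  have hmoved : {A ∈ 𝒜.image (compress u v) | A ∉ 𝒜} = 𝒜'.image (compress u v) := by
    rw [filter_image]
  have hne : 𝒜'.Nonempty := by
    rw [nonempty_iff_ne_empty]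
    intro h𝒜'
    refine h ?_
    rw [compression, hmoved, h𝒜', image_empty, union_empty]
    exact filter_true_of_mem fun A hA => not_not.1 fun hA' =>
      (notMem_empty A) (h𝒜' ▸ mem_filter.2 ⟨hA, hA'⟩)
  rw [compression, sum_union compress_disjoint, hmoved, sum_image compress_injOn,
    ← sum_filter_add_sum_filter_not 𝒜 (compress u v · ∈ 𝒜)]
  refine add_lt_add_right (sum_lt_sum_of_nonempty hne fun A hA => ?_) _
  obtain ⟨hA, hcA⟩ := mem_filter.1 hA
  exact hf A hA fun h => hcA (by rwa [h])

lemma exists_mem_forall_swap_mem_of_mem_compression {H : Finset α}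
    (hH : H ∈ 𝓒 {x} {y} 𝒜) :
    ∃ G ∈ 𝒜, (H ∉ 𝒜 → x ∉ G) ∧ ∀ z ∈ G, z ≠ x → Equiv.swap x y z ∈ H := by
  rcases mem_compression.1 hH with ⟨hH𝒜, hcH⟩ | ⟨hH𝒜, G, hG, rfl⟩
  · refine ⟨compress {x} {y} H, hcH, fun h => (h hH𝒜).elim, fun z hz hzx => ?_⟩
    rw [compress_singleton] at hz
    rw [Equiv.swap_apply_def]
    split_ifs at hz ⊢ <;> grind
  · have hpat : y ∈ G ∧ x ∉ G := by
      by_contra hpat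
      rw [compress_singleton, if_neg hpat] at hH𝒜
      exact hH𝒜 hG
    refine ⟨G, hG, fun _ => hpat.2, fun z hz hzx => ?_⟩
    rw [compress_singleton, if_pos hpat, Equiv.swap_apply_def]
    split_ifs <;> grind

end

lemma _root_.RwiseIntersecting.uvCompression {r t x y : ℕ} {𝒜 : Finset (Finset ℕ)}
    (h𝒜 : RwiseIntersecting r t 𝒜) : RwiseIntersecting r t (𝓒 {x} {y} 𝒜) := by
  intro H hH
  by_cases hall : ∀ i, H i ∈ 𝒜
  · exact h𝒜 H hall
  obtain ⟨i₀, hi₀⟩ := not_forall.1 hall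
  choose G hG hxG hswap using fun i => exists_mem_forall_swap_mem_of_mem_compression (hH i)
  have hxW : x ∉ ⋂ i, (G i : Set ℕ) := fun hx => hxG i₀ hi₀ (Set.mem_iInter.1 hx i₀)
  calc t ≤ (⋂ i, (G i : Set ℕ)).ncard := h𝒜 G hG
    _ = (Equiv.swap x y '' ⋂ i, (G i : Set ℕ)).ncard :=
        (Set.ncard_image_of_injective _ (Equiv.injective _)).symm
    _ ≤ (⋂ i, (H i : Set ℕ)).ncard := by
        refine Set.ncard_le_ncard ?_ ((H i₀).finite_toSet.subset (Set.iInter_subset _ i₀))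
        rintro _ ⟨z, hz, rfl⟩
        exact Set.mem_iInter.2 fun i =>
          hswap i z (Set.mem_iInter.1 hz i) fun h => hxW (h ▸ hz)

end UV

-- Only `0 < x`: the ground set is `[n] = {1, …, n}`.
def IsShifted (𝓖 : Finset (Finset ℕ)) : Prop :=
  ∀ ⦃x y : ℕ⦄, 0 < x → x < y → UV.IsCompressed {x} {y} 𝓖

lemma exists_isShifted {P : Finset (Finset ℕ) → Prop}
    (hP : ∀ ⦃𝒜 : Finset (Finset ℕ)⦄ ⦃x y : ℕ⦄, 0 < x → x < y → P 𝒜 → P (𝓒 {x} {y} 𝒜))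
    {𝒜 : Finset (Finset ℕ)} (h𝒜 : P 𝒜) : ∃ ℬ, P ℬ ∧ IsShifted ℬ := by
  induction hw : ∑ A ∈ 𝒜, ∑ a ∈ A, a using Nat.strong_induction_on generalizing 𝒜 with
  | _ w ih =>
    by_cases h : IsShifted 𝒜
    · exact ⟨𝒜, h𝒜, h⟩
    simp only [IsShifted, not_forall] at h
    obtain ⟨x, y, hx, hxy, hne⟩ := h
    refine ih _ (hw ▸ UV.sum_compression_lt (fun A _ hA => ?_) hne) (hP hx hxy h𝒜) rfl
    rw [UV.compress_singleton] at hA ⊢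
    split_ifs at hA ⊢ with hpat
    · rw [sum_insert fun h => hpat.2 (mem_of_mem_erase h), ← add_sum_erase A (fun a => a) hpat.1]
      exact Nat.add_lt_add_right hxy _
    · exact absurd rfl hA

lemma min'_sdiff_lt_min'_sdiff {G H : Finset ℕ} (hGH : (G \ H).Nonempty)
    (hHG : (H \ G).Nonempty) (hle : ∀ m, #{z ∈ G | z ≤ m} ≤ #{z ∈ H | z ≤ m}) :
    (H \ G).min' hHG < (G \ H).min' hGH := by
  set y := (G \ H).min' hGH
  set x := (H \ G).min' hHG
  obtain ⟨hyG, hyH⟩ : y ∈ G ∧ y ∉ H := mem_sdiff.1 (min'_mem _ hGH)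
  have hxH : x ∈ H := (mem_sdiff.1 (min'_mem _ hHG)).1
  by_contra! hyx
  have hyx : y < x := hyx.lt_of_ne fun h => hyH (h ▸ hxH)
  refine (hle y).not_gt (card_lt_card ⟨fun z hz => ?_, fun hsub => ?_⟩)
  · obtain ⟨hzH, hzy⟩ := mem_filter.1 hz
    refine mem_filter.2 ⟨by_contra fun hzG => ?_, hzy⟩
    exact (min'_le _ z (mem_sdiff.2 ⟨hzH, hzG⟩)).not_gt (hzy.trans_lt hyx)
  · exact hyH (mem_filter.1 (hsub (mem_filter.2 ⟨hyG, le_rfl⟩))).1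

lemma card_filter_insert_erase_le {G H : Finset ℕ} {x y m : ℕ} (hxH : x ∈ H) (hxG : x ∉ G)
    (hyG : y ∈ G) (hxy : x < y) (hG_lt_y : ∀ z ∈ G, z < y → z ∈ H)
    (hle : #{z ∈ G | z ≤ m} ≤ #{z ∈ H | z ≤ m}) :
    #{z ∈ insert x (G.erase y) | z ≤ m} ≤ #{z ∈ H | z ≤ m} := by
  by_cases hmy : m < y
  · refine card_le_card fun z hz => ?_
    simp only [mem_filter, mem_insert, mem_erase] at hz ⊢
    rcases hz with ⟨rfl | ⟨-, hzG⟩, hzm⟩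
    exacts [⟨hxH, hzm⟩, ⟨hG_lt_y z hzG (hzm.trans_lt hmy), hzm⟩]
  · rw [filter_insert, if_pos (by omega), filter_erase,
      card_insert_of_notMem fun h => hxG (mem_filter.1 (mem_of_mem_erase h)).1,
      card_erase_of_mem (mem_filter.2 ⟨hyG, by omega⟩)]
    have : 0 < #{z ∈ G | z ≤ m} := card_pos.2 ⟨y, mem_filter.2 ⟨hyG, by omega⟩⟩
    omega

namespace IsShifted

variable {𝓖 : Finset (Finset ℕ)} {G H : Finset ℕ}

lemma insert_erase_mem (h𝓖 : IsShifted 𝓖) (hG : G ∈ 𝓖) {x y : ℕ} (hx : 0 < x) (hxy : x < y)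
    (hyG : y ∈ G) (hxG : x ∉ G) : insert x (G.erase y) ∈ 𝓖 := by
  have := UV.compress_mem_compression (u := {x}) (v := {y}) hG
  rwa [h𝓖 hx hxy, UV.compress_singleton, if_pos ⟨hyG, hxG⟩] at this

lemma mem_of_forall_card_filter_le (h𝓖 : IsShifted 𝓖) (hG : G ∈ 𝓖) (hH : 0 ∉ H)
    (hcard : #H = #G) (hle : ∀ m, #{z ∈ G | z ≤ m} ≤ #{z ∈ H | z ≤ m}) : H ∈ 𝓖 := by
  induction hd : #(G \ H) generalizing G with
  | zero =>
    rwa [← eq_of_subset_of_card_le (sdiff_eq_empty_iff_subset.1 (card_eq_zero.1 hd)) hcard.le]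
  | succ d ih =>
    -- Move the least element of `G \ H` down to the least element of `H \ G`.
    have hGH : (G \ H).Nonempty := card_pos.1 (by omega)
    have hHG : (H \ G).Nonempty := by
      rw [← card_pos, card_sdiff_comm hcard]; exact card_pos.2 hGH
    have hxy := min'_sdiff_lt_min'_sdiff hGH hHG hle
    set y := (G \ H).min' hGH
    set x := (H \ G).min' hHG
    obtain ⟨hyG, hyH⟩ : y ∈ G ∧ y ∉ H := mem_sdiff.1 (min'_mem _ hGH)
    obtain ⟨hxH, hxG⟩ : x ∈ H ∧ x ∉ G := mem_sdiff.1 (min'_mem _ hHG)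
    have hG_lt_y : ∀ z ∈ G, z < y → z ∈ H := fun z hz hzy => by
      by_contra hzH
      exact (min'_le _ z (mem_sdiff.2 ⟨hz, hzH⟩)).not_gt hzy
    refine ih (h𝓖.insert_erase_mem hG (Nat.pos_of_ne_zero fun h => hH (h ▸ hxH)) hxy hyG hxG)
      ?_ (fun m => card_filter_insert_erase_le hxH hxG hyG hxy hG_lt_y (hle m)) ?_
    · rw [card_insert_of_notMem fun h => hxG (mem_of_mem_erase h), card_erase_of_mem hyG, hcard]
      have := card_pos.2 ⟨y, hyG⟩
      omega
    · rw [insert_sdiff_of_mem _ hxH, erase_sdiff_comm, card_erase_of_mem (mem_sdiff.2 ⟨hyG, hyH⟩),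
        hd, Nat.add_sub_cancel]

end IsShifted

lemma exists_isShifted_rwiseIntersecting {n k r t : ℕ} {𝓕 : Finset (Finset ℕ)}
    (h𝓕 : 𝓕 ⊆ powersetCard k (Icc 1 n)) (hint : RwiseIntersecting r t 𝓕) :
    ∃ 𝓖 ⊆ powersetCard k (Icc 1 n), RwiseIntersecting r t 𝓖 ∧ #𝓖 = #𝓕 ∧
      (∀ b, #(∂^[b] 𝓖) ≤ #(∂^[b] 𝓕)) ∧ IsShifted 𝓖 := by
  obtain ⟨𝓖, ⟨h𝓖, h𝓖int, h𝓖card, h𝓖shadow⟩, h𝓖sh⟩ := exists_isShifted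
    (P := fun 𝓖 => 𝓖 ⊆ powersetCard k (Icc 1 n) ∧ RwiseIntersecting r t 𝓖 ∧ #𝓖 = #𝓕 ∧
      ∀ b, #(∂^[b] 𝓖) ≤ #(∂^[b] 𝓕))
    (fun 𝒜 x y hx hxy ⟨h𝒜, h𝒜int, h𝒜card, h𝒜shadow⟩ =>
      ⟨UV.compression_subset_powersetCard (by simp only [mem_Icc]; omega) h𝒜,
        h𝒜int.uvCompression, (UV.card_compression _ _ _).trans h𝒜card,
        fun b => (UV.card_shadow_iterate_compression_le _ _ _ b).trans (h𝒜shadow b)⟩)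
    ⟨h𝓕, hint, rfl, fun _ => le_rfl⟩
  exact ⟨𝓖, h𝓖, h𝓖int, h𝓖card, h𝓖shadow, h𝓖sh⟩

lemma Nat.exists_count_eq_of_le_count {p : ℕ → Prop} [DecidablePred p] {m N : ℕ}
    (h : m ≤ Nat.count p N) : ∃ N', Nat.count p N' = m := by
  induction N with
  | zero => exact ⟨0, by simp_all⟩
  | succ N ih =>
    by_cases h' : m ≤ Nat.count p N
    · exact ih h'
    · refine ⟨N + 1, ?_⟩
      rw [Nat.count_succ] at h ⊢
      split_ifs at h ⊢ <;> omega

lemma exists_card_eq_forall_card_filter_le {p : ℕ → Prop} [DecidablePred p] {F : Finset ℕ}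
    (hF : ∀ m, #{z ∈ F | z ≤ m} ≤ Nat.count p (m + 1)) :
    ∃ G : Finset ℕ, #G = #F ∧ (∀ z ∈ G, p z) ∧ ∀ m, #{z ∈ F | z ≤ m} ≤ #{z ∈ G | z ≤ m} := by
  have hF_sup : {z ∈ F | z ≤ F.sup id} = F := filter_true_of_mem fun z hz => le_sup (f := id) hz
  obtain ⟨N, hN⟩ := Nat.exists_count_eq_of_le_count (hF_sup ▸ hF (F.sup id))
  refine ⟨{z ∈ range N | p z}, by rw [← Nat.count_eq_card_filter_range, hN],
    fun z hz => (mem_filter.1 hz).2, fun m => ?_⟩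
  by_cases hmN : m < N
  · have : {z ∈ {z ∈ range N | p z} | z ≤ m} = {z ∈ range (m + 1) | p z} := by
      ext z
      simp only [mem_filter, mem_range]
      constructor
      · rintro ⟨⟨-, hz⟩, hzm⟩
        exact ⟨by omega, hz⟩
      · rintro ⟨hzm, hz⟩
        exact ⟨⟨by omega, hz⟩, by omega⟩
    rw [this, ← Nat.count_eq_card_filter_range]
    exact hF m
  · have hN_le : ∀ z ∈ {z ∈ range N | p z}, z ≤ m := fun z hz => by
      have := mem_range.1 (mem_filter.1 hz).1
      omega
    rw [filter_true_of_mem hN_le, ← Nat.count_eq_card_filter_range, hN]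
    exact card_filter_le _ _

lemma sub_div_le_count {r t : ℕ} (hr : 0 < r) (σ m : ℕ) :
    m - (m + r - t) / r ≤ Nat.count (fun z => 0 < z ∧ ¬(t ≤ z ∧ (z - t) % r = σ)) (m + 1) := by
  have hresidue : #{z ∈ Icc 1 m | t ≤ z ∧ (z - t) % r = σ} ≤ (m + r - t) / r := by
    refine (card_le_card_of_injOn (fun z => (z - t) / r) (fun z hz => ?_)
      fun z hz z' hz' h => ?_).trans_eq (card_range _)
    · simp only [coe_filter, mem_Icc, Set.mem_ofPred_eq] at hz
      have : m + r - t = (m - t) + r := by omega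
      rw [coe_range, Set.mem_Iio, this, Nat.add_div_right _ hr, Nat.lt_succ_iff]
      exact Nat.div_le_div_right (by omega)
    · simp only [coe_filter, mem_Icc, Set.mem_ofPred_eq] at hz hz'
      have := Nat.div_add_mod (z - t) r
      have := Nat.div_add_mod (z' - t) r
      simp only at h
      rw [h] at *
      omega
  rw [Nat.count_eq_card_filter_range]
  calc m - (m + r - t) / r ≤ #{z ∈ Icc 1 m | ¬(t ≤ z ∧ (z - t) % r = σ)} := by
        have := card_filter_add_card_filter_not (s := Icc 1 m) (fun z => t ≤ z ∧ (z - t) % r = σ)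
        rw [Nat.card_Icc] at this
        omega
    _ ≤ _ := card_le_card fun z hz => by
        simp only [mem_filter, mem_Icc, mem_range] at hz ⊢
        exact ⟨by omega, by omega, hz.2⟩

lemma card_filter_le_sub_div {F : Finset ℕ} {r t : ℕ} (hr : 0 < r) (hF : 0 ∉ F)
    (hsmall : ∀ i, #{z ∈ F | z ≤ t + r * i} < t + (r - 1) * i) (m : ℕ) :
    #{z ∈ F | z ≤ m} ≤ m - (m + r - t) / r := by
  by_cases hmt : m < t
  · rw [Nat.div_eq_of_lt (by omega), Nat.sub_zero]
    refine (card_le_card fun z hz => ?_).trans_eq (Nat.card_Icc 1 m)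
    obtain ⟨hzF, hzm⟩ := mem_filter.1 hz
    exact mem_Icc.2 ⟨Nat.pos_of_ne_zero fun h => hF (h ▸ hzF), hzm⟩
  set i := (m - t) / r
  have hm : m - t = r * i + (m - t) % r := (Nat.div_add_mod _ _).symm
  have hρ : (m - t) % r < r := Nat.mod_lt _ hr
  have hdiv : (m + r - t) / r = i + 1 := by
    rw [show m + r - t = (m - t) + r by omega, Nat.add_div_right _ hr]
  have hsplit : #{z ∈ F | z ≤ m} ≤ #{z ∈ F | z ≤ t + r * i} + (m - (t + r * i)) := by
    rw [← Nat.card_Ioc]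
    refine (card_le_card fun z hz => ?_).trans (card_union_le _ _)
    obtain ⟨hzF, hzm⟩ := mem_filter.1 hz
    by_cases hzi : z ≤ t + r * i
    · exact mem_union_left _ (mem_filter.2 ⟨hzF, hzi⟩)
    · exact mem_union_right _ (mem_Ioc.2 ⟨by omega, hzm⟩)
  have := hsmall i
  have : (r - 1) * i = r * i - i := Nat.sub_one_mul r i
  have : i ≤ r * i := Nat.le_mul_of_pos_left i hr
  omega

def HasWindow (r t : ℕ) (F : Finset ℕ) : Prop :=
  ∃ i, t + (r - 1) * i ≤ #{z ∈ F | z ≤ t + r * i}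

theorem IsShifted.hasWindow {𝓖 : Finset (Finset ℕ)} {F : Finset ℕ} {r t : ℕ}
    (h𝓖 : IsShifted 𝓖) (h𝓖r : RwiseIntersecting r t 𝓖) (hr : 0 < r) (hF : F ∈ 𝓖) (hF0 : 0 ∉ F) :
    HasWindow r t F := by
  by_contra hsmall
  simp only [HasWindow, not_exists, not_le] at hsmall
  have ht : 0 < t := by simpa using (Nat.zero_le _).trans_lt (hsmall 0)
  -- `G σ`: the first `#F` positive integers outside the class `t + σ (mod r)` above `t`.
  choose G hGcard hGp hGle using fun σ : Fin r => exists_card_eq_forall_card_filter_le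
    fun m => (card_filter_le_sub_div hr hF0 hsmall m).trans (sub_div_le_count hr σ m)
  have hG𝓖 : ∀ σ, G σ ∈ 𝓖 := fun σ =>
    h𝓖.mem_of_forall_card_filter_le hF (fun h => (hGp σ 0 h).1.false) (hGcard σ) (hGle σ)
  have hsub : ⋂ σ, (G σ : Set ℕ) ⊆ (Icc 1 (t - 1) : Finset ℕ) := fun z hz => by
    have hzG := Set.mem_iInter.1 hz
    have hz0 := (hGp ⟨0, hr⟩ z (hzG _)).1
    rw [mem_coe, mem_Icc]
    by_contra hzt
    exact (hGp ⟨(z - t) % r, Nat.mod_lt _ hr⟩ z (hzG _)).2 ⟨by omega, rfl⟩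
  have := (h𝓖r G hG𝓖).trans (Set.ncard_le_ncard hsub (finite_toSet _))
  rw [Set.ncard_coe_finset, Nat.card_Icc] at this
  omega

theorem two_pow_mul_card_lt_card_shadow_iterate_of_hasWindow {r t b : ℕ}
    (hnum : ∀ i k, t + (r - 1) * i ≤ k → 2 ^ b * (i + 1).ascFactorial b < k.descFactorial b)
    {n k : ℕ} {𝓑 : Finset (Finset ℕ)} (h𝓑 : 𝓑 ⊆ powersetCard k (Icc 1 n)) (hne : 𝓑.Nonempty)
    (hwin : ∀ F ∈ 𝓑, HasWindow r t F) :
    2 ^ b * #𝓑 < #(∂^[b] 𝓑) := by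
  induction n generalizing k 𝓑 with
  | zero =>
    obtain ⟨F, hF⟩ := hne
    obtain ⟨i, hi⟩ := hwin F hF
    exact mul_card_lt_card_shadow_iterate_of_mul_ascFactorial_lt h𝓑 ⟨F, hF⟩ (by simp)
      (hnum i k (hi.trans ((card_filter_le _ _).trans (mem_powersetCard.1 (h𝓑 hF)).2.le)))
  | succ n ih =>
    by_cases hbase : ∃ i, t + (r - 1) * i ≤ k ∧ n + 1 ≤ t + r * i
    · obtain ⟨i, hik, hni⟩ := hbase
      refine mul_card_lt_card_shadow_iterate_of_mul_ascFactorial_lt h𝓑 hne ?_ (hnum i k hik)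
      have := Nat.sub_one_mul r i
      rw [Nat.card_Icc]
      omega
    push Not at hbase
    have hIcc : (Icc 1 (n + 1)).erase (n + 1) = Icc 1 n := by
      ext; simp only [mem_erase, mem_Icc]; omega
    refine mul_card_lt_card_shadow_iterate_of_subfamilies (a := n + 1) hne
      (fun h₀ => ih (hIcc ▸ nonMemberSubfamily_subset_powersetCard _ h𝓑) h₀
        fun F hF => hwin F (mem_nonMemberSubfamily.1 hF).1)
      (fun h₁ => ih (hIcc ▸ memberSubfamily_subset_powersetCard _ h𝓑) h₁ fun F hF => ?_)
    -- Every window lies below `n + 1`, so removing `n + 1` keeps it.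
    have hF' := (mem_memberSubfamily.1 hF).1
    obtain ⟨i, hi⟩ := hwin _ hF'
    have := hbase i (hi.trans ((card_filter_le _ _).trans (mem_powersetCard.1 (h𝓑 hF')).2.le))
    exact ⟨i, by rwa [filter_insert, if_neg (by omega)] at hi⟩

lemma two_pow_two_mul_ascFactorial_lt_descFactorial {i k : ℕ} (h : 2 * i + 4 ≤ k) :
    2 ^ 2 * (i + 1).ascFactorial 2 < k.descFactorial 2 := by
  refine lt_of_lt_of_le ?_ (Nat.descFactorial_le 2 h)
  simp only [Nat.reducePow, Nat.ascFactorial_succ, add_zero, Nat.ascFactorial_zero, mul_one,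
    Nat.descFactorial_succ, Nat.add_one_sub_one, tsub_zero, Nat.descFactorial_zero]
  nlinarith

lemma two_pow_four_mul_ascFactorial_lt_descFactorial {i k : ℕ} (h : 2 * i + 7 ≤ k) :
    2 ^ 4 * (i + 1).ascFactorial 4 < k.descFactorial 4 := by
  refine lt_of_lt_of_le ?_ (Nat.descFactorial_le 4 h)
  simp only [Nat.reducePow, Nat.ascFactorial_succ, add_zero, Nat.ascFactorial_zero, mul_one,
    Nat.descFactorial_succ, Nat.reduceSubDiff, Nat.add_one_sub_one, tsub_zero,
    Nat.descFactorial_zero]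
  nlinarith [sq_nonneg i]

lemma bShadow_eq_shadow_iterate {k b : ℕ} {𝓕 : Finset (Finset ℕ)} {S : Finset ℕ}
    (h𝓕 : 𝓕 ⊆ powersetCard k S) (hb : b ≤ k) : bShadow k b 𝓕 = ∂^[b] 𝓕 := by
  ext E
  simp only [bShadow, mem_biUnion, mem_powersetCard, mem_shadow_iterate_iff_exists_sdiff]
  refine exists_congr fun F => and_congr_right fun hF => and_congr_right fun hEF => ?_
  obtain ⟨-, hFk⟩ := mem_powersetCard.1 (h𝓕 hF)
  rw [card_sdiff_of_subset hEF, hFk]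
  have := card_le_card hEF
  omega

theorem three_wise_shadow_bounds_general
    (n k t : ℕ) (hk : t ≤ k)
    (𝓕 : Finset (Finset ℕ)) (hne : 𝓕.Nonempty)
    (h𝓕 : 𝓕 ⊆ Finset.powersetCard k (Finset.Icc 1 n))
    (hint : RwiseIntersecting 3 t 𝓕) :
    (4 ≤ t → 4 * 𝓕.card < (bShadow k 2 𝓕).card) ∧
      (7 ≤ t → 16 * 𝓕.card < (bShadow k 4 𝓕).card) := by
  obtain ⟨𝓖, h𝓖, h𝓖int, h𝓖card, h𝓖shadow, h𝓖sh⟩ := exists_isShifted_rwiseIntersecting h𝓕 hint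
  have hwin : ∀ F ∈ 𝓖, HasWindow 3 t F := fun F hF =>
    h𝓖sh.hasWindow h𝓖int three_pos hF fun h0 => by
      simpa using (mem_powersetCard.1 (h𝓖 hF)).1 h0
  have hbound : ∀ b ≤ k, (∀ i k', t + (3 - 1) * i ≤ k' →
      2 ^ b * (i + 1).ascFactorial b < k'.descFactorial b) →
      2 ^ b * #𝓕 < #(bShadow k b 𝓕) := fun b hb hnum => by
    rw [bShadow_eq_shadow_iterate h𝓕 hb, ← h𝓖card]
    exact (two_pow_mul_card_lt_card_shadow_iterate_of_hasWindow hnum h𝓖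
      (card_pos.1 (h𝓖card ▸ card_pos.2 hne)) hwin).trans_le (h𝓖shadow b)
  exact ⟨fun ht => by simpa using hbound 2 (by omega) fun i k' h =>
      two_pow_two_mul_ascFactorial_lt_descFactorial (by omega),
    fun ht => by simpa using hbound 4 (by omega) fun i k' h =>
      two_pow_four_mul_ascFactorial_lt_descFactorial (by omega)⟩

theorem three_wise_shadow_bounds
    (n k t : ℕ) (ht : 1 ≤ t) (hk : t ≤ k)
    (𝓕 : Finset (Finset ℕ)) (hne : 𝓕.Nonempty)
    (h𝓕 : 𝓕 ⊆ Finset.powersetCard k (Finset.Icc 1 n))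
    (hint : RwiseIntersecting 3 t 𝓕) :
    (4 ≤ t → 4 * 𝓕.card < (bShadow k 2 𝓕).card) ∧
      (7 ≤ t → 16 * 𝓕.card < (bShadow k 4 𝓕).card) :=
  three_wise_shadow_bounds_general n k t hk 𝓕 hne h𝓕 hint
end
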